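/- arXiv:2312.16213 — 4 statements merged into one kernel-verified Lean document; each statement's English description precedes it below -/
import Mathlib

section
/- If L is an odd list (all nonzero entries are odd) and the simple list 1(L) = (l_{ij} mod 2) is feasible, then L is feasible. -/
open Finset

/-- Two permutations are adjacent if every element's position changes by at most one. -/
def Adjacent {n : ℕ} (π σ : Equiv.Perm (Fin n)) : Prop :=
  ∀ i, ((π i : ℤ) - (σ i : ℤ)).natAbs ≤ 1

/-- Number of times wires `i` and `j` swap in the sequence `T` of height `h`. -/
def SwapCount {n : ℕ} (T : ℕ → Equiv.Perm (Fin n)) (h : ℕ) (i j : Fin n) : ℕ :=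
  ((Finset.range (h - 1)).filter fun t => T t i = T (t+1) j ∧ T t j = T (t+1) i).card

/-- A tangle of height `h`: a nonempty sequence of permutations with consecutive ones adjacent. -/
def IsTangle {n : ℕ} (T : ℕ → Equiv.Perm (Fin n)) (h : ℕ) : Prop :=
  1 ≤ h ∧ ∀ t, t + 1 < h → Adjacent (T t) (T (t+1))

/-- A tangle starting at the identity realizing the list `l`. -/
def Realizes {n : ℕ} (T : ℕ → Equiv.Perm (Fin n)) (h : ℕ) (l : Fin n → Fin n → ℕ) : Prop :=
  IsTangle T h ∧ T 0 = 1 ∧ ∀ i j, i ≠ j → SwapCount T h i j = l i j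

/-- A list is feasible if some tangle starting at the identity realizes it. -/
def Feasible {n : ℕ} (l : Fin n → Fin n → ℕ) : Prop :=
  ∃ h T, Realizes T h l

/-- A list is consistent if the map `id_n L` is a permutation of `[n]`. -/
def Consistent {n : ℕ} (l : Fin n → Fin n → ℕ) : Prop :=
  ∃ ρ : Equiv.Perm (Fin n), ∀ i : Fin n,
    ((i : ℤ) + ((Finset.univ.filter fun j => i < j ∧ Odd (l i j)).card : ℤ)
      - ((Finset.univ.filter fun j => j < i ∧ Odd (l i j)).card : ℤ)) = (ρ i : ℤ)

/-! If wires `i` and `j` swap at some step of a tangle, they sit in neighbouring positions just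
before it, so a detour can be spliced in there: exchange `i` and `j` and exchange them back. This
realizes the list with `l i j` (and `l j i`) raised by two and nothing else changed. An odd list
arises from its parity list `1(L)` by such raises, so by induction on `L` in the pointwise order,
removing two swaps of a pair with `l i j ≥ 3` at each step, feasibility of `1(L)` carries over. -/

open Equiv

section

variable {n : ℕ}

theorem Adjacent.symm {π σ : Perm (Fin n)} (h : Adjacent π σ) : Adjacent σ π :=
  fun i => by rw [← Int.natAbs_neg, neg_sub]; exact h i

theorem adjacent_swap_trans {π : Perm (Fin n)} {a b : Fin n}
    (h : ((π a : ℤ) - π b).natAbs ≤ 1) : Adjacent π ((swap a b).trans π) := by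
  intro c
  rcases eq_or_ne c a with rfl | hca
  · simpa using h
  rcases eq_or_ne c b with rfl | hcb
  · rwa [Equiv.trans_apply, swap_apply_right, ← Int.natAbs_neg, neg_sub]
  · simp [swap_apply_of_ne_of_ne hca hcb]

theorem exchanges_swap_trans_iff (π : Perm (Fin n)) {a b i j : Fin n} (hab : a ≠ b) :
    (π a = (swap i j).trans π b ∧ π b = (swap i j).trans π a) ↔ s(a, b) = s(i, j) := by
  simp only [Equiv.trans_apply, EmbeddingLike.apply_eq_iff_eq, Sym2.eq_iff]
  constructor
  · rintro ⟨h, -⟩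
    rcases eq_or_ne b i with rfl | hbi
    · rw [swap_apply_left] at h
      exact .inr ⟨h, rfl⟩
    rcases eq_or_ne b j with rfl | hbj
    · rw [swap_apply_right] at h
      exact .inl ⟨h, rfl⟩
    · exact absurd (h.trans (swap_apply_of_ne_of_ne hbi hbj)) hab
  · rintro (⟨rfl, rfl⟩ | ⟨rfl, rfl⟩) <;> simp

def detour (T : ℕ → Perm (Fin n)) (t : ℕ) (σ : Perm (Fin n)) (s : ℕ) : Perm (Fin n) :=
  if s ≤ t then T s else if s = t + 1 then σ else T (s - 2)

section Detour

variable {T : ℕ → Perm (Fin n)} {t : ℕ} {σ : Perm (Fin n)}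

theorem detour_of_le {s : ℕ} (hs : s ≤ t) : detour T t σ s = T s := if_pos hs

theorem detour_succ : detour T t σ (t + 1) = σ := by simp [detour]

theorem detour_add_two {s : ℕ} (hs : t ≤ s) : detour T t σ (s + 2) = T s := by
  simp [detour, show ¬ s + 2 ≤ t by omega, show s + 2 ≠ t + 1 by omega]

theorem IsTangle.detour {h : ℕ} (hT : IsTangle T h) (ht : t < h) (hσ : Adjacent (T t) σ) :
    IsTangle (detour T t σ) (h + 2) := by
  refine ⟨by omega, fun s hs => ?_⟩
  rcases lt_trichotomy s t with hst | rfl | hst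
  · rw [detour_of_le hst.le, detour_of_le hst]
    exact hT.2 s (by omega)
  · rwa [detour_of_le le_rfl, detour_succ]
  obtain rfl | hst := (Nat.succ_le_of_lt hst).eq_or_lt
  · rw [detour_succ, detour_add_two le_rfl]
    exact hσ.symm
  obtain ⟨r, rfl⟩ : ∃ r, s = r + 2 := ⟨s - 2, by omega⟩
  rw [detour_add_two (by omega), add_right_comm, detour_add_two (by omega)]
  exact hT.2 r (by omega)

theorem swapCount_detour {h : ℕ} (ht : t < h) (a b : Fin n) :
    SwapCount (detour T t σ) (h + 2) a b =
      SwapCount T h a b + if T t a = σ b ∧ T t b = σ a then 2 else 0 := by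
  obtain ⟨k, hk⟩ := Nat.exists_eq_add_of_lt ht
  have h₁ : h + 2 - 1 = t + 2 + k := by omega
  have h₂ : h - 1 = t + k := by omega
  simp only [SwapCount, card_filter, h₁, h₂, sum_range_add]
  have before : ∀ s ∈ range t, detour T t σ s = T s ∧ detour T t σ (s + 1) = T (s + 1) :=
    fun s hs => ⟨detour_of_le (mem_range.mp hs).le, detour_of_le (mem_range.mp hs)⟩
  rw [sum_congr rfl fun s hs => by rw [(before s hs).1, (before s hs).2]]
  have after : ∀ s, detour T t σ (t + 2 + s) = T (t + s) := fun s => by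
    rw [add_right_comm, detour_add_two (by omega)]
  have after' : ∀ s, detour T t σ (t + 2 + s + 1) = T (t + s + 1) := fun s => after (s + 1)
  have back : detour T t σ (t + 1 + 1) = T t := detour_add_two le_rfl
  have exch : (σ a = T t b ∧ σ b = T t a) ↔ (T t a = σ b ∧ T t b = σ a) :=
    ⟨fun h => ⟨h.2.symm, h.1.symm⟩, fun h => ⟨h.2.symm, h.1.symm⟩⟩
  simp only [after, after', sum_range_succ, sum_range_zero, add_zero, detour_of_le le_rfl,
    detour_succ, back, exch]
  split_ifs <;> omega

end Detour

theorem Feasible.congr {l l' : Fin n → Fin n → ℕ} (hf : Feasible l)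
    (hl : ∀ i j, i ≠ j → l i j = l' i j) : Feasible l' := by
  obtain ⟨h, T, hT, hT0, hcount⟩ := hf
  exact ⟨h, T, hT, hT0, fun i j hij => (hcount i j hij).trans (hl i j hij)⟩

def twoSwaps (i j : Fin n) : Fin n → Fin n → ℕ :=
  fun a b => if s(a, b) = s(i, j) then 2 else 0

theorem twoSwaps_comm (i j a b : Fin n) : twoSwaps i j a b = twoSwaps i j b a := by
  simp only [twoSwaps, Sym2.eq_swap]

theorem even_twoSwaps (i j a b : Fin n) : Even (twoSwaps i j a b) := by
  unfold twoSwaps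
  split_ifs <;> simp

theorem twoSwaps_le {l : Fin n → Fin n → ℕ} (hsym : ∀ i j, l i j = l j i) {i j : Fin n}
    (h : 2 ≤ l i j) : twoSwaps i j ≤ l := fun a b => by
  unfold twoSwaps
  split_ifs with hab
  · rcases Sym2.eq_iff.mp hab with ⟨rfl, rfl⟩ | ⟨rfl, rfl⟩ <;> [exact h; exact hsym a b ▸ h]
  · exact Nat.zero_le _

theorem sub_twoSwaps_lt {l : Fin n → Fin n → ℕ} {i j : Fin n} (h : 2 ≤ l i j) :
    l - twoSwaps i j < l := by
  refine Pi.lt_def.mpr ⟨tsub_le_self, i, Pi.lt_def.mpr ⟨tsub_le_self, j, ?_⟩⟩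
  simp only [Pi.sub_apply, twoSwaps, ↓reduceIte]
  omega

theorem Feasible.add_twoSwaps {l : Fin n → Fin n → ℕ} (hf : Feasible l) {i j : Fin n}
    (hij : i ≠ j) (hpos : 0 < l i j) : Feasible (l + twoSwaps i j) := by
  obtain ⟨h, T, hT, hT0, hcount⟩ := hf
  obtain ⟨t, ht⟩ := card_pos.mp ((hcount i j hij).symm ▸ hpos : 0 < SwapCount T h i j)
  rw [mem_filter, mem_range] at ht
  obtain ⟨ht, -, hj⟩ := ht
  have hadj : Adjacent (T t) ((swap i j).trans (T t)) :=
    adjacent_swap_trans (by simpa only [hj] using hT.2 t (by omega) i)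
  refine ⟨h + 2, detour T t _, hT.detour (by omega) hadj, by rw [detour_of_le t.zero_le, hT0],
    fun a b hab => ?_⟩
  rw [swapCount_detour (by omega), hcount a b hab, Pi.add_apply, Pi.add_apply, twoSwaps]
  simp only [exchanges_swap_trans_iff _ hab]

end

theorem odd_list_feasible_of_parity_feasible_general (n : ℕ) (l : Fin n → Fin n → ℕ)
    (hsym : ∀ i j, l i j = l j i)
    (hodd : ∀ i j, l i j ≠ 0 → Odd (l i j))
    (hf : Feasible (fun i j => l i j % 2)) :
    Feasible l := by
  induction l using WellFoundedLT.induction with | _ l ih => ?_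
  by_cases hsmall : ∀ i j, i ≠ j → l i j ≤ 1
  · exact hf.congr fun i j hij => Nat.mod_eq_of_lt (Nat.lt_succ_of_le (hsmall i j hij))
  push Not at hsmall
  obtain ⟨i, j, hij, hbig⟩ := hsmall
  have h3 : 3 ≤ l i j := by obtain ⟨k, hk⟩ := hodd i j (by omega); omega
  have hle : twoSwaps i j ≤ l := twoSwaps_le hsym (by omega)
  have hred : Feasible (l - twoSwaps i j) := by
    refine ih _ (sub_twoSwaps_lt (by omega))
      (fun a b => by simp only [Pi.sub_apply, hsym a b, twoSwaps_comm i j a b])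
      (fun a b hab => ?_) (hf.congr fun a b _ => ?_)
    · simp only [Pi.sub_apply] at hab ⊢
      exact Nat.Odd.sub_even (hle a b) (hodd a b (by omega)) (even_twoSwaps i j a b)
    · obtain ⟨k, hk⟩ := even_twoSwaps i j a b
      have : twoSwaps i j a b ≤ l a b := hle a b
      simp only [Pi.sub_apply]
      omega
  have hpos : 0 < (l - twoSwaps i j) i j := by
    simp only [Pi.sub_apply, twoSwaps, ↓reduceIte]
    omega
  simpa only [tsub_add_cancel_of_le hle] using hred.add_twoSwaps hij hpos

/-- If L is an odd list and 1(L) is feasible, then L is feasible. -/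
theorem odd_list_feasible_of_parity_feasible (n : ℕ) (l : Fin n → Fin n → ℕ)
    (hsym : ∀ i j, l i j = l j i) (hdiag : ∀ i, l i i = 0)
    (hodd : ∀ i j, l i j ≠ 0 → Odd (l i j))
    (hf : Feasible (fun i j => l i j % 2)) :
    Feasible l :=
  odd_list_feasible_of_parity_feasible_general n l hsym hodd hf
end

section
/- For n ≥ 3 and an odd list L of order n, L is feasible if and only if for every 3-element subset A ⊆ [n], the restricted list L_A (consisting of the swaps of L between wires of A) is feasible; moreover both are equivalent to L being consistent. -/
open Finset

section Tournament
variable {m : ℕ} (r : Fin m → Fin m → Prop) [DecidableRel r]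

def tsc (x : Fin m) : ℕ := (univ.filter fun y => r y x).card

variable (hirr : ∀ x, ¬ r x x) (htour : ∀ x y, x ≠ y → (r x y ↔ ¬ r y x))

include hirr in
theorem tsc_lt_card (x : Fin m) : tsc r x < m := by
  have hsub : (univ.filter fun y => r y x) ⊆ univ.erase x := by
    intro y hy
    simp only [mem_filter] at hy
    exact Finset.mem_erase.mpr ⟨fun h => hirr x (h ▸ hy.2), mem_univ _⟩
  have := Finset.card_le_card hsub
  have hx : (univ.erase x).card = m - 1 := by
    rw [Finset.card_erase_of_mem (mem_univ x), Finset.card_univ, Fintype.card_fin]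
  have hm : 0 < m := by rcases x with ⟨v, hv⟩; omega
  unfold tsc; omega

include hirr htour in
theorem tsc_lt (hno3 : ∀ x y z, r x y → r y z → r z x → False)
    {x y : Fin m} (hxy : r x y) : tsc r x < tsc r y := by
  have hxyne : x ≠ y := fun h => hirr x (h ▸ hxy)
  have hsub : insert x (univ.filter fun k => r k x) ⊆ univ.filter fun k => r k y := by
    intro k hk
    rcases Finset.mem_insert.mp hk with h | h
    · subst h; exact mem_filter.mpr ⟨mem_univ _, hxy⟩
    · have hrkx : r k x := (mem_filter.mp h).2
      have hky : k ≠ y := fun e => ((htour x y hxyne).mp hxy) (e ▸ hrkx)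
      have : r k y := by
        by_contra hn
        exact hno3 x y k hxy ((htour y k hky.symm).mpr hn) hrkx
      exact mem_filter.mpr ⟨mem_univ _, this⟩
  have hx : x ∉ (univ.filter fun k => r k x) := by simp [hirr x]
  have := Finset.card_le_card hsub
  rw [Finset.card_insert_of_notMem hx] at this
  unfold tsc; omega

include hirr htour in
theorem tsc_inj (hno3 : ∀ x y z, r x y → r y z → r z x → False) :
    Function.Injective (tsc r) := by
  intro x y h
  by_contra hne
  by_cases hr : r x y
  · exact absurd h (Nat.ne_of_lt (tsc_lt r hirr htour hno3 hr))
  · exact absurd h (Nat.ne_of_gt (tsc_lt r hirr htour hno3 ((htour y x (Ne.symm hne)).mpr hr)))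

include hirr htour in
theorem tsc_rev (hinj : Function.Injective (tsc r)) :
    ∀ x y, r y x ↔ tsc r y < tsc r x := by
  have himg : univ.image (tsc r) = range m := by
    apply Finset.eq_of_subset_of_card_le
    · intro v hv
      simp only [Finset.mem_image] at hv
      obtain ⟨x, -, rfl⟩ := hv
      exact Finset.mem_range.mpr (tsc_lt_card r hirr x)
    · rw [Finset.card_range, Finset.card_image_of_injective _ hinj, Finset.card_univ,
        Fintype.card_fin]
  have hcard : ∀ x, (univ.filter fun y => tsc r y < tsc r x).card = tsc r x := by
    intro x
    rw [show (univ.filter fun y => tsc r y < tsc r x).card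
        = ((univ.image (tsc r)).filter fun v => v < tsc r x).card from by
      rw [Finset.filter_image, Finset.card_image_of_injective _ hinj]]
    rw [himg]
    rw [show (range m).filter (fun v => v < tsc r x) = range (tsc r x) from by
      ext v; simp only [mem_filter, mem_range]
      exact ⟨fun h => h.2, fun h => ⟨lt_trans h (tsc_lt_card r hirr x), h⟩⟩]
    exact Finset.card_range _
  have main : ∀ N (x : Fin m), tsc r x = N →
      (univ.filter fun y => r y x) = univ.filter fun y => tsc r y < tsc r x := by
    intro N
    induction N using Nat.strong_induction_on with
    | _ N IH =>
      intro x hx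
      refine (Finset.eq_of_subset_of_card_le ?_ ?_).symm
      · intro j hj
        simp only [mem_filter, mem_univ, true_and] at hj ⊢
        have hjx : j ≠ x := fun e => absurd (e ▸ hj) (lt_irrefl _)
        by_contra hn
        have hxj : r x j := (htour x j hjx.symm).mpr hn
        have hmem : x ∈ univ.filter fun y => tsc r y < tsc r j := by
          rw [← IH (tsc r j) (by omega) j rfl]
          exact mem_filter.mpr ⟨mem_univ _, hxj⟩
        have := (mem_filter.mp hmem).2
        omega
      · rw [hcard x]
        unfold tsc
        exact le_refl _
  intro x y
  have := main (tsc r x) x rfl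
  constructor
  · intro h
    have : y ∈ univ.filter fun z => tsc r z < tsc r x := by
      rw [← this]; exact mem_filter.mpr ⟨mem_univ _, h⟩
    exact (mem_filter.mp this).2
  · intro h
    have : y ∈ univ.filter fun z => r z x := by
      rw [this]; exact mem_filter.mpr ⟨mem_univ _, h⟩
    exact (mem_filter.mp this).2
end Tournament


section ListRel
variable {n : ℕ} (l : Fin n → Fin n → ℕ)

def lrel (x y : Fin n) : Prop := (x < y ∧ ¬ Odd (l x y)) ∨ (y < x ∧ Odd (l x y))

instance : DecidableRel (lrel l) := fun x y => by unfold lrel; infer_instance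

theorem lrel_irrefl : ∀ x, ¬ lrel l x x := by
  intro x h
  rcases h with ⟨h, -⟩ | ⟨h, -⟩ <;> exact lt_irrefl _ h

variable (hsym : ∀ i j, l i j = l j i)

include hsym in
theorem lrel_tour : ∀ x y, x ≠ y → (lrel l x y ↔ ¬ lrel l y x) := by
  intro x y hne
  unfold lrel
  rw [hsym y x]
  rcases lt_trichotomy x y with h | h | h
  · simp [h, lt_asymm h]
  · exact absurd h hne
  · simp [h, lt_asymm h]

def tsc' (x : Fin n) : ℕ := (univ.filter fun y => lrel l y x).card

include hsym in
theorem lrel_score (i : Fin n) :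
    (tsc' l i : ℤ) = (i : ℤ) + ((univ.filter fun j => i < j ∧ Odd (l i j)).card : ℤ)
      - ((univ.filter fun j => j < i ∧ Odd (l i j)).card : ℤ) := by
  have hre : (univ.filter fun y => lrel l y i)
      = univ.filter fun y => (y < i ∧ ¬ Odd (l i y)) ∨ (i < y ∧ Odd (l i y)) := by
    ext y
    simp only [mem_filter, mem_univ, true_and]
    unfold lrel
    rw [hsym y i]
  have hsplit : (univ.filter fun y => (y < i ∧ ¬ Odd (l i y)) ∨ (i < y ∧ Odd (l i y)))
      = (univ.filter fun y => y < i ∧ ¬ Odd (l i y)) ∪ (univ.filter fun y => i < y ∧ Odd (l i y)) :=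
    Finset.filter_or _ _ _
  have hdisj : Disjoint (univ.filter fun y => y < i ∧ ¬ Odd (l i y))
      (univ.filter fun y => i < y ∧ Odd (l i y)) := by
    simp only [Finset.disjoint_left, mem_filter]
    rintro a ⟨-, h1, -⟩ ⟨-, h2, -⟩
    exact absurd h2 (not_lt_of_gt h1)
  have hpart : (univ.filter fun y => y < i ∧ Odd (l i y)).card
      + (univ.filter fun y => y < i ∧ ¬ Odd (l i y)).card = (i : ℕ) := by
    have h1 := Finset.card_filter_add_card_filter_not
      (s := univ.filter fun y => y < (i : Fin n)) (p := fun y => Odd (l i y))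
    rw [Finset.filter_filter, Finset.filter_filter] at h1
    rw [show (univ.filter fun y => y < i) = Iio i from by ext; simp, Fin.card_Iio] at h1
    exact h1
  have := congrArg Finset.card hsplit
  rw [Finset.card_union_of_disjoint hdisj] at this
  unfold tsc'
  rw [hre, this]
  push_cast
  omega

include hsym in
theorem consistent_iff_inj : Consistent l ↔ Function.Injective (tsc' l) := by
  constructor
  · rintro ⟨ρ, hρ⟩
    have hval : ∀ i, (tsc' l i : ℤ) = ((ρ i : ℕ) : ℤ) := by
      intro i
      rw [lrel_score l hsym i, hρ i]
    intro x y h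
    apply ρ.injective
    have : ((ρ x : ℕ) : ℤ) = ((ρ y : ℕ) : ℤ) := by rw [← hval, ← hval, h]
    exact Fin.ext (by exact_mod_cast this)
  · intro hinj
    have hlt : ∀ x, tsc' l x < n := fun x => tsc_lt_card (lrel l) (lrel_irrefl l) x
    let g : Fin n → Fin n := fun x => ⟨tsc' l x, hlt x⟩
    have hg : Function.Injective g := by
      intro x y h
      exact hinj (congrArg Fin.val h)
    refine ⟨Equiv.ofBijective g (Finite.injective_iff_bijective.mp hg), fun i => ?_⟩
    have h2 : ((Equiv.ofBijective g (Finite.injective_iff_bijective.mp hg)) i : ℕ) = tsc' l i := rfl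
    have h3 := lrel_score l hsym i
    omega

end ListRel

section Restrict
variable {n : ℕ} (l : Fin n → Fin n → ℕ)

theorem tri_mono {a b c : Fin n} (hab : a < b) (hbc : b < c) :
    StrictMono ![a, b, c] := by
  intro i j hij
  fin_cases i <;> fin_cases j <;>
    simp_all [Matrix.cons_val_zero, Matrix.cons_val_one, Matrix.head_cons] <;>
    first
      | exact hab | exact hbc | exact hab.trans hbc
      | exact absurd hij (by decide) | exact absurd hij (lt_irrefl _)

theorem lrel_restrict {a b c : Fin n} (hab : a < b) (hbc : b < c) (i j : Fin 3) :
    lrel (fun i j : Fin 3 => l (![a, b, c] i) (![a, b, c] j)) i j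
      ↔ lrel l (![a, b, c] i) (![a, b, c] j) := by
  unfold lrel
  rw [(tri_mono hab hbc).lt_iff_lt, (tri_mono hab hbc).lt_iff_lt]

variable (hsym : ∀ i j, l i j = l j i)

include hsym in
theorem exists_inv_perm (hcons : Consistent l) :
    ∃ ρ : Equiv.Perm (Fin n), ∀ a b, a < b → (Odd (l a b) ↔ ρ b < ρ a) := by
  have hinj : Function.Injective (tsc (lrel l)) := (consistent_iff_inj l hsym).mp hcons
  have hiff := tsc_rev (lrel l) (lrel_irrefl l) (lrel_tour l hsym) hinj
  let g : Fin n → Fin n := fun x => ⟨tsc (lrel l) x, tsc_lt_card _ (lrel_irrefl l) x⟩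
  have hg : Function.Injective g := fun x y h => hinj (congrArg Fin.val h)
  refine ⟨Equiv.ofBijective g (Finite.injective_iff_bijective.mp hg), fun a b hab => ?_⟩
  have h1 : Odd (l a b) ↔ lrel l b a := by
    unfold lrel
    rw [hsym b a]
    simp [hab, lt_asymm hab]
  have h2 : lrel l b a ↔ tsc (lrel l) b < tsc (lrel l) a := hiff a b
  have h3 : (Equiv.ofBijective g (Finite.injective_iff_bijective.mp hg)) b
      < (Equiv.ofBijective g (Finite.injective_iff_bijective.mp hg)) a
      ↔ tsc (lrel l) b < tsc (lrel l) a := Iff.rfl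
  rw [h1, h2, h3]

include hsym in
theorem no3_of_cons (hcons : Consistent l) :
    ∀ x y z, lrel l x y → lrel l y z → lrel l z x → False := by
  have hinj : Function.Injective (tsc (lrel l)) := (consistent_iff_inj l hsym).mp hcons
  have hiff := tsc_rev (lrel l) (lrel_irrefl l) (lrel_tour l hsym) hinj
  intro x y z h1 h2 h3
  have a1 := (hiff y x).mp h1
  have a2 := (hiff z y).mp h2
  have a3 := (hiff x z).mp h3
  omega

include hsym in
theorem tricons_of_cons (hcons : Consistent l) :
    ∀ a b c : Fin n, a < b → b < c →
      Consistent (fun i j : Fin 3 => l (![a, b, c] i) (![a, b, c] j)) := by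
  intro a b c hab hbc
  have hno3 := no3_of_cons l hsym hcons
  set l' := fun i j : Fin 3 => l (![a, b, c] i) (![a, b, c] j) with hl'
  have hsym' : ∀ i j, l' i j = l' j i := fun i j => hsym _ _
  have hno3' : ∀ i j k : Fin 3, lrel l' i j → lrel l' j k → lrel l' k i → False := by
    intro i j k h1 h2 h3
    rw [lrel_restrict l hab hbc] at h1 h2 h3
    exact hno3 _ _ _ h1 h2 h3
  exact (consistent_iff_inj l' hsym').mpr
    (tsc_inj (lrel l') (lrel_irrefl l') (lrel_tour l' hsym') hno3')

include hsym in
theorem cons_of_tricons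
    (htrip : ∀ a b c : Fin n, a < b → b < c →
      Consistent (fun i j : Fin 3 => l (![a, b, c] i) (![a, b, c] j))) :
    Consistent l := by
  have key : ∀ (a b c : Fin n), a < b → b < c → ∀ i j k : Fin 3,
      lrel l (![a,b,c] i) (![a,b,c] j) → lrel l (![a,b,c] j) (![a,b,c] k) →
      lrel l (![a,b,c] k) (![a,b,c] i) → False := by
    intro a b c hab hbc i j k h1 h2 h3
    set l' := fun i j : Fin 3 => l (![a, b, c] i) (![a, b, c] j) with hl'
    have hsym' : ∀ i j, l' i j = l' j i := fun i j => hsym _ _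
    have hinj : Function.Injective (tsc (lrel l')) :=
      (consistent_iff_inj l' hsym').mp (htrip a b c hab hbc)
    have hiff := tsc_rev (lrel l') (lrel_irrefl l') (lrel_tour l' hsym') hinj
    rw [← lrel_restrict l hab hbc] at h1 h2 h3
    have a1 := (hiff j i).mp h1
    have a2 := (hiff k j).mp h2
    have a3 := (hiff i k).mp h3
    omega
  have hno3 : ∀ x y z, lrel l x y → lrel l y z → lrel l z x → False := by
    intro x y z h1 h2 h3
    have hxy : x ≠ y := fun e => lrel_irrefl l y (e ▸ h1)
    have hyz : y ≠ z := fun e => lrel_irrefl l z (e ▸ h2)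
    have hzx : z ≠ x := fun e => lrel_irrefl l x (e ▸ h3)
    rcases lt_trichotomy x y with h | h | h
    · rcases lt_trichotomy y z with h' | h' | h'
      · exact key x y z h h' 0 1 2 (by simpa using h1) (by simpa using h2) (by simpa using h3)
      · exact absurd h' hyz
      · rcases lt_trichotomy x z with h'' | h'' | h''
        · exact key x z y h'' h' 0 2 1 (by simpa using h1) (by simpa using h2) (by simpa using h3)
        · exact absurd h''.symm hzx
        · exact key z x y h'' h 1 2 0 (by simpa using h1) (by simpa using h2) (by simpa using h3)
    · exact absurd h hxy
    · rcases lt_trichotomy x z with h' | h' | h'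
      · exact key y x z h h' 1 0 2 (by simpa using h1) (by simpa using h2) (by simpa using h3)
      · exact absurd h'.symm hzx
      · rcases lt_trichotomy y z with h'' | h'' | h''
        · exact key y z x h'' h' 2 0 1 (by simpa using h1) (by simpa using h2) (by simpa using h3)
        · exact absurd h'' hyz
        · exact key z y x h'' h 2 1 0 (by simpa using h1) (by simpa using h2) (by simpa using h3)
  exact (consistent_iff_inj l hsym).mpr
    (tsc_inj (lrel l) (lrel_irrefl l) (lrel_tour l hsym) hno3)

end Restrict

section FeasCons
variable {n : ℕ}

theorem flip_step {π σ : Equiv.Perm (Fin n)} (hadj : Adjacent π σ) {a b : Fin n}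
    (h1 : π a < π b) (h2 : σ b < σ a) : π a = σ b ∧ π b = σ a := by
  have ha := hadj a
  have hb := hadj b
  rw [Fin.lt_def] at h1 h2
  constructor <;> (apply Fin.ext; omega)

theorem feas_cons (l : Fin n → Fin n → ℕ) (hsym : ∀ i j, l i j = l j i)
    (hfeas : Feasible l) : Consistent l := by
  obtain ⟨h, T, ⟨hh1, hadj⟩, hT0, hcnt⟩ := hfeas
  set cnt : ℕ → Fin n → Fin n → ℕ := fun t a b =>
    ((Finset.range t).filter fun s => T s a = T (s+1) b ∧ T s b = T (s+1) a).card with hcntdef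
  have ord : ∀ t, t ≤ h - 1 → ∀ a b, a ≠ b →
      (T t a < T t b ↔ ((a < b) ↔ Even (cnt t a b))) := by
    intro t
    induction t with
    | zero =>
      intro _ a b hab
      simp [hT0, hcntdef]
    | succ t IH =>
      intro ht a b hab
      have ht' : t ≤ h - 1 := by omega
      have htlt : t + 1 < h := by omega
      have hTne : ∀ s, T s a ≠ T s b := fun s e => hab ((T s).injective e)
      have hcs : cnt (t+1) a b = cnt t a b
          + (if T t a = T (t+1) b ∧ T t b = T (t+1) a then 1 else 0) := by
        rw [hcntdef]
        simp only
        rw [Finset.range_add_one, Finset.filter_insert]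
        split_ifs with hc
        · rw [Finset.card_insert_of_notMem (by simp)]
        · omega
      by_cases hsw : T t a = T (t+1) b ∧ T t b = T (t+1) a
      · have hx : T (t+1) a < T (t+1) b ↔ ¬ (T t a < T t b) := by
          rw [← hsw.1, ← hsw.2]
          have hne : (T t a).val ≠ (T t b).val := Fin.val_ne_iff.mpr (hTne t)
          rw [Fin.lt_def, Fin.lt_def]
          omega
        rw [hcs, if_pos hsw, hx, IH ht' a b hab, Nat.even_add_one]
        tauto
      · have hx : T (t+1) a < T (t+1) b ↔ T t a < T t b := by
          constructor
          · intro h'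
            by_contra hn
            have : T t b < T t a := lt_of_le_of_ne (not_lt.mp hn) (hTne t).symm
            exact hsw ⟨(flip_step (hadj t htlt) this h').2, (flip_step (hadj t htlt) this h').1⟩
          · intro h'
            by_contra hn
            have : T (t+1) b < T (t+1) a := lt_of_le_of_ne (not_lt.mp hn) (hTne (t+1)).symm
            exact hsw ⟨(flip_step (hadj t htlt) h' this).1, (flip_step (hadj t htlt) h' this).2⟩
        rw [hcs, if_neg hsw, hx, IH ht' a b hab]
        simp
  set ρ := T (h - 1) with hρ
  refine ⟨ρ, fun i => ?_⟩
  have hval : ((ρ i : ℕ)) = (univ.filter fun j => ρ j < ρ i).card := by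
    rw [show (univ.filter fun j => ρ j < ρ i).card
        = ((univ.image fun j => ρ j).filter fun x => x < ρ i).card from by
      rw [Finset.filter_image, Finset.card_image_of_injective _ ρ.injective],
      show (univ.image fun j => ρ j) = univ from Finset.image_univ_equiv ρ,
      show (univ.filter fun x => x < ρ i) = Iio (ρ i) from by ext; simp, Fin.card_Iio]
  have hcnteq : ∀ j, j ≠ i → cnt (h-1) j i = l i j := by
    intro j hj
    have : cnt (h-1) j i = SwapCount T h j i := rfl
    rw [this, hcnt j i hj, hsym j i]
  have hsetsplit : (univ.filter fun j => ρ j < ρ i)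
      = (univ.filter fun j => j < i ∧ ¬ Odd (l i j)) ∪ (univ.filter fun j => i < j ∧ Odd (l i j)) := by
    ext j
    simp only [Finset.mem_filter, Finset.mem_union, Finset.mem_univ, true_and]
    rcases lt_trichotomy j i with hj | hj | hj
    · have hne : j ≠ i := ne_of_lt hj
      rw [ord (h-1) le_rfl j i hne, hcnteq j hne, ← Nat.not_odd_iff_even]
      constructor
      · intro hiff; exact Or.inl ⟨hj, hiff.mp hj⟩
      · rintro (⟨-, he⟩ | ⟨hij, -⟩)
        · exact iff_of_true hj he
        · exact absurd hij (not_lt_of_gt hj)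
    · subst hj
      simp [lt_irrefl]
    · have hne : j ≠ i := ne_of_gt hj
      rw [ord (h-1) le_rfl j i hne, hcnteq j hne, ← Nat.not_odd_iff_even]
      constructor
      · intro hiff
        refine Or.inr ⟨hj, ?_⟩
        by_contra hodd
        exact absurd (hiff.mpr hodd) (not_lt_of_gt hj)
      · rintro (⟨hij, -⟩ | ⟨-, ho⟩)
        · exact absurd hij (not_lt_of_gt hj)
        · constructor
          · intro hji; exact absurd hji (not_lt_of_gt hj)
          · intro he; exact absurd ho he
  have hdisj : Disjoint (univ.filter fun j => j < i ∧ ¬ Odd (l i j))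
      (univ.filter fun j => i < j ∧ Odd (l i j)) := by
    simp only [Finset.disjoint_left, Finset.mem_filter]
    rintro x ⟨-, hx, -⟩ ⟨-, hx', -⟩
    exact absurd hx' (not_lt_of_gt hx)
  have hpart : (univ.filter fun j => j < i ∧ Odd (l i j)).card
      + (univ.filter fun j => j < i ∧ ¬ Odd (l i j)).card = (i : ℕ) := by
    have h1 := Finset.card_filter_add_card_filter_not
      (s := univ.filter fun j => j < i) (p := fun j => Odd (l i j))
    rw [Finset.filter_filter, Finset.filter_filter] at h1
    rw [show (univ.filter fun j => j < i) = Iio i from by ext; simp, Fin.card_Iio] at h1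
    exact h1
  have := congrArg Finset.card hsetsplit
  rw [Finset.card_union_of_disjoint hdisj] at this
  rw [this] at hval
  push_cast
  omega

end FeasCons

section Build
variable {n : ℕ}

theorem split_count (A B : ℕ) (P : ℕ → Prop) [DecidablePred P] :
    ((Finset.range (A+B)).filter P).card
      = ((Finset.range A).filter P).card + ((Finset.range B).filter fun t => P (A+t)).card := by
  rw [Finset.range_add, Finset.filter_union, Finset.filter_map, Finset.card_union_of_disjoint,
    Finset.card_map]
  · rfl
  · simp only [Finset.disjoint_left, Finset.mem_filter, Finset.mem_map, Finset.mem_range,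
      addLeftEmbedding_apply]
    rintro x ⟨hx, -⟩ ⟨y, -, rfl⟩
    omega

theorem exists_descent (ρ : Equiv.Perm (Fin n)) {x y : Fin n} (hxy : x < y) (hd : ρ y < ρ x) :
    ∃ i i' : Fin n, i < i' ∧ (i' : ℕ) = (i : ℕ) + 1 ∧ ρ i' < ρ i := by
  by_contra hc
  push_neg at hc
  have step : ∀ k (a b : Fin n), (b:ℕ) = (a:ℕ) + k + 1 → ρ a < ρ b := by
    intro k
    induction k with
    | zero =>
      intro a b hb
      have hab : a < b := by rw [Fin.lt_def]; omega
      have h1 := hc a b hab (by omega)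
      exact lt_of_le_of_ne h1 (fun e => (ne_of_lt hab) (ρ.injective e))
    | succ k IH =>
      intro a b hb
      have hcb : ((a:ℕ) + k + 1) < n := by have := b.isLt; omega
      have h1 : ρ a < ρ ⟨(a:ℕ) + k + 1, hcb⟩ := IH a _ rfl
      have h2 : ρ ⟨(a:ℕ) + k + 1, hcb⟩ < ρ b := by
        have hcb' : (⟨(a:ℕ) + k + 1, hcb⟩ : Fin n) < b := by rw [Fin.lt_def]; simp; omega
        have h3 := hc _ b hcb' (by simp; omega)
        exact lt_of_le_of_ne h3 (fun e => (ne_of_lt hcb') (ρ.injective e))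
      exact h1.trans h2
  have hk : (y:ℕ) = (x:ℕ) + ((y:ℕ) - (x:ℕ) - 1) + 1 := by
    have := Fin.lt_def.mp hxy; omega
  exact absurd (step _ x y hk) (not_lt_of_gt hd)

theorem feas_zero (l : Fin n → Fin n → ℕ) (hz : ∀ x y, l x y = 0) : Feasible l := by
  refine ⟨1, fun _ => 1, ⟨le_refl _, fun t ht => by omega⟩, rfl, fun i j hij => ?_⟩
  simp [SwapCount, hz]

end Build

section Build2
variable {n : ℕ}

theorem buildAux : ∀ N (l : Fin n → Fin n → ℕ),
    (∑ x, ∑ y, l x y) ≤ N →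
    (∀ i j, l i j = l j i) → (∀ i, l i i = 0) → (∀ i j, l i j ≠ 0 → Odd (l i j)) →
    (∃ ρ : Equiv.Perm (Fin n), ∀ a b, a < b → (l a b ≠ 0 ↔ ρ b < ρ a)) →
    Feasible l := by
  intro N
  induction N with
  | zero =>
    intro l hN _ _ _ _
    apply feas_zero
    intro x y
    have h0 : ∑ x, ∑ y, l x y = 0 := Nat.le_zero.mp hN
    have h1 := Finset.sum_eq_zero_iff.mp h0
    exact Finset.sum_eq_zero_iff.mp (h1 x (Finset.mem_univ x)) y (Finset.mem_univ y)
  | succ N IH =>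
    rintro l hN hsym hdiag hodd ⟨ρ, hρ⟩
    by_cases hz : ∀ x y, l x y = 0
    · exact feas_zero l hz
    push_neg at hz
    obtain ⟨x, y, hxy0⟩ := hz
    have hxyne : x ≠ y := fun e => hxy0 (by rw [e]; exact hdiag y)
    have hdesc : ∃ p q : Fin n, p < q ∧ ρ q < ρ p := by
      rcases lt_trichotomy x y with h | h | h
      · exact ⟨x, y, h, (hρ x y h).mp hxy0⟩
      · exact absurd h hxyne
      · exact ⟨y, x, h, (hρ y x h).mp (by rw [hsym y x]; exact hxy0)⟩
    obtain ⟨p, q, hpq, hd⟩ := hdesc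
    obtain ⟨i, i', hii', hval, hdesc'⟩ := exists_descent ρ hpq hd
    have hine : i ≠ i' := ne_of_lt hii'
    set σ := Equiv.swap i i' with hσdef
    have hσi : σ i = i' := Equiv.swap_apply_left i i'
    have hσi' : σ i' = i := Equiv.swap_apply_right i i'
    have hσo : ∀ z, z ≠ i → z ≠ i' → σ z = z := fun z h1 h2 => Equiv.swap_apply_of_ne_of_ne h1 h2
    have hσσ : ∀ z, σ (σ z) = z := fun z => Equiv.swap_apply_self i i' z
    set m := l i i' with hmdef
    have hm0 : m ≠ 0 := (hρ i i' hii').mpr hdesc'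
    have hmodd : Odd m := hodd i i' hm0
    have hm1 : 1 ≤ m := Nat.pos_of_ne_zero hm0
    set lz : Fin n → Fin n → ℕ :=
      fun u v => if (u = i ∧ v = i') ∨ (u = i' ∧ v = i) then 0 else l u v with hlzdef
    have hlzeq : ∀ u v, ¬((u = i ∧ v = i') ∨ (u = i' ∧ v = i)) → lz u v = l u v :=
      fun u v h => if_neg h
    have hlz0 : lz i i' = 0 := if_pos (Or.inl ⟨rfl, rfl⟩)
    have hlz0' : lz i' i = 0 := if_pos (Or.inr ⟨rfl, rfl⟩)
    set l₂ : Fin n → Fin n → ℕ := fun u v => lz (σ u) (σ v) with hl₂def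
    have hlzsym : ∀ u v, lz u v = lz v u := by
      intro u v
      simp only [hlzdef]
      rw [hsym u v]
      exact if_congr (by tauto) rfl rfl
    have hl₂sym : ∀ u v, l₂ u v = l₂ v u := fun u v => hlzsym _ _
    have hl₂diag : ∀ u, l₂ u u = 0 := by
      intro u
      simp only [hl₂def, hlzdef]
      split_ifs with hc
      · rfl
      · exact hdiag _
    have hl₂odd : ∀ u v, l₂ u v ≠ 0 → Odd (l₂ u v) := by
      intro u v hne
      simp only [hl₂def, hlzdef] at *
      split_ifs at hne ⊢ with hc
      · exact absurd rfl hne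
      · exact hodd _ _ hne
    -- order facts
    have hvi : (i : ℕ) + 1 = (i' : ℕ) := hval.symm
    have hl₂ρ : ∀ a b, a < b → (l₂ a b ≠ 0 ↔ (ρ * σ) b < (ρ * σ) a) := by
      intro a b hab
      have habne : a ≠ b := ne_of_lt hab
      have habv := Fin.lt_def.mp hab
      simp only [Equiv.Perm.mul_apply, hl₂def]
      by_cases hai : a = i
      · by_cases hbi' : b = i'
        · rw [hai, hbi', hσi, hσi', hlz0']
          exact iff_of_false (fun hh => hh rfl) (fun hh => absurd hh (lt_asymm hdesc'))
        · -- a = i, b > i'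
          have hbne : b ≠ i := by rw [← hai]; exact habne.symm
          have hbgt : i' < b := by
            rw [Fin.lt_def]
            have h1 : (b : ℕ) ≠ (i' : ℕ) := Fin.val_ne_iff.mpr hbi'
            rw [hai] at habv
            omega
          rw [hai, hσi, hσo b hbne hbi']
          rw [hlzeq i' b (by
            rintro (⟨h1, -⟩ | ⟨-, h2⟩)
            · exact hine h1.symm
            · exact hbne h2)]
          exact hρ i' b hbgt
      · by_cases hai' : a = i'
        · -- a = i', so b > i'
          have hbne : b ≠ i := by
            intro e
            rw [hai', e] at hab
            exact absurd hab (lt_asymm hii')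
          have hbne' : b ≠ i' := by rw [← hai']; exact habne.symm
          have hbgt : i < b := hii'.trans (hai' ▸ hab)
          rw [hai', hσi', hσo b hbne hbne']
          rw [hlzeq i b (by
            rintro (⟨-, h2⟩ | ⟨h1, -⟩)
            · exact hbne' h2
            · exact hine h1)]
          exact hρ i b hbgt
        · -- a ∉ {i, i'}
          by_cases hbi : b = i
          · have halt : a < i' := by
              rw [Fin.lt_def]
              rw [hbi] at habv
              omega
            rw [hbi, hσi, hσo a hai hai']
            rw [hlzeq a i' (by
              rintro (⟨h1, -⟩ | ⟨-, h2⟩)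
              · exact hai h1
              · exact hine h2.symm)]
            exact hρ a i' halt
          · by_cases hbi' : b = i'
            · have halt : a < i := by
                rw [Fin.lt_def]
                rw [hbi'] at habv
                have h1 : (a : ℕ) ≠ (i : ℕ) := Fin.val_ne_iff.mpr hai
                omega
              rw [hbi', hσi', hσo a hai hai']
              rw [hlzeq a i (by
                rintro (⟨h1, -⟩ | ⟨h1, -⟩)
                · exact hai h1
                · exact hai' h1)]
              exact hρ a i halt
            · rw [hσo a hai hai', hσo b hbi hbi']
              rw [hlzeq a b (by
                rintro (⟨h1, -⟩ | ⟨h1, -⟩)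
                · exact hai h1
                · exact hai' h1)]
              exact hρ a b hab
    -- sum decrease
    have hre : (∑ u, ∑ v, l₂ u v) = ∑ u, ∑ v, lz u v := by
      have h1 : ∀ u : Fin n, (∑ v, l₂ u v) = ∑ v, lz (σ u) v := by
        intro u
        exact Equiv.sum_comp σ (fun v => lz (σ u) v)
      rw [Finset.sum_congr rfl (fun u _ => h1 u)]
      exact Equiv.sum_comp σ (fun u => ∑ v, lz u v)
    have hdec : (∑ u, ∑ v, l₂ u v) < ∑ u, ∑ v, l u v := by
      rw [hre]
      apply Finset.sum_lt_sum
      · intro u _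
        apply Finset.sum_le_sum
        intro v _
        simp only [hlzdef]
        split_ifs
        · exact Nat.zero_le _
        · exact le_refl _
      · refine ⟨i, Finset.mem_univ i, ?_⟩
        apply Finset.sum_lt_sum
        · intro v _
          simp only [hlzdef]
          split_ifs
          · exact Nat.zero_le _
          · exact le_refl _
        · refine ⟨i', Finset.mem_univ i', ?_⟩
          rw [hlz0]
          omega
    obtain ⟨h₂, T₂, ⟨hh₂, hadj₂⟩, hT₂0, hcnt₂⟩ :=
      IH l₂ (by omega) hl₂sym hl₂diag hl₂odd ⟨ρ * σ, hl₂ρ⟩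
    -- build the tangle
    set W : ℕ → Equiv.Perm (Fin n) := fun t => if Even t then 1 else σ with hWdef
    set T : ℕ → Equiv.Perm (Fin n) := fun t => if t < m then W t else T₂ (t - m) * σ with hTdef
    have hTm : ∀ t, T (m + t) = T₂ t * σ := by
      intro t
      simp only [hTdef]
      rw [if_neg (by omega), Nat.add_sub_cancel_left]
    have hTW : ∀ t, t ≤ m → T t = W t := by
      intro t ht
      rcases lt_or_eq_of_le ht with h | h
      · simp only [hTdef]; rw [if_pos h]
      · rw [h]
        have hne : ¬ Even m := Nat.not_even_iff_odd.mpr hmodd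
        have h1 : T m = T₂ 0 * σ := by
          simp only [hTdef]; rw [if_neg (lt_irrefl m), Nat.sub_self]
        rw [h1, hT₂0, one_mul]
        simp only [hWdef]
        rw [if_neg hne]
    have hadj1σ : Adjacent 1 σ := by
      intro z
      simp only [Equiv.Perm.one_apply]
      by_cases hz1 : z = i
      · rw [hz1, hσi]
        have : ((i : ℕ) : ℤ) - ((i' : ℕ) : ℤ) = -1 := by omega
        omega
      · by_cases hz2 : z = i'
        · rw [hz2, hσi']
          omega
        · rw [hσo z hz1 hz2]
          omega
    have hadjσ1 : Adjacent σ 1 := by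
      intro z
      have := hadj1σ z
      simp only [Equiv.Perm.one_apply] at *
      omega
    have hadjT : ∀ t, t + 1 < m + h₂ → Adjacent (T t) (T (t+1)) := by
      intro t ht
      by_cases htm : t + 1 ≤ m
      · rw [hTW t (by omega), hTW (t+1) htm]
        rcases Nat.even_or_odd t with he | ho
        · have h1 : W t = 1 := if_pos he
          have h2 : W (t+1) = σ := if_neg (by simp [Nat.even_add_one, he])
          rw [h1, h2]; exact hadj1σ
        · have h1 : W t = σ := if_neg (Nat.not_even_iff_odd.mpr ho)
          have h2 : W (t+1) = 1 := if_pos (Nat.even_add_one.mpr (Nat.not_even_iff_odd.mpr ho))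
          rw [h1, h2]; exact hadjσ1
      · push_neg at htm
        have h1 : T t = T₂ (t - m) * σ := by
          simp only [hTdef]; rw [if_neg (by omega)]
        have h2 : T (t+1) = T₂ (t - m + 1) * σ := by
          simp only [hTdef]; rw [if_neg (by omega), show t + 1 - m = t - m + 1 by omega]
        rw [h1, h2]
        intro z
        simp only [Equiv.Perm.mul_apply]
        exact hadj₂ (t - m) (by omega) (σ z)
    have hT0 : T 0 = 1 := by
      rw [hTW 0 (by omega)]
      exact if_pos (by exact Even.zero)
    have hswapiff : ∀ u v : Fin n, u ≠ v →
        ((u = σ v ∧ v = σ u) ↔ ((u = i ∧ v = i') ∨ (u = i' ∧ v = i))) := by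
      intro u v huv
      constructor
      · rintro ⟨h1, h2⟩
        by_cases hvi : v = i
        · right
          refine ⟨?_, hvi⟩
          rw [h1, hvi, hσi]
        · by_cases hvi' : v = i'
          · left
            refine ⟨?_, hvi'⟩
            rw [h1, hvi', hσi']
          · rw [hσo v hvi hvi'] at h1
            exact absurd h1 huv
      · rintro (⟨h1, h2⟩ | ⟨h1, h2⟩)
        · rw [h1, h2, hσi, hσi']; exact ⟨rfl, rfl⟩
        · rw [h1, h2, hσi, hσi']; exact ⟨rfl, rfl⟩
    refine ⟨m + h₂, T, ⟨by omega, hadjT⟩, hT0, ?_⟩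
    intro a b hab
    have hσab : σ a ≠ σ b := fun e => hab (σ.injective e)
    rw [SwapCount, show m + h₂ - 1 = m + (h₂ - 1) by omega, split_count]
    have hcond1 : ∀ t, t < m → ((T t a = T (t+1) b ∧ T t b = T (t+1) a)
        ↔ ((a = i ∧ b = i') ∨ (a = i' ∧ b = i))) := by
      intro t ht
      rw [hTW t (le_of_lt ht), hTW (t+1) (by omega)]
      rcases Nat.even_or_odd t with he | ho
      · have h1 : W t = 1 := if_pos he
        have h2 : W (t+1) = σ := if_neg (by simp [Nat.even_add_one, he])
        rw [h1, h2]
        simp only [Equiv.Perm.one_apply]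
        exact hswapiff a b hab
      · have h1 : W t = σ := if_neg (Nat.not_even_iff_odd.mpr ho)
        have h2 : W (t+1) = 1 := if_pos (Nat.even_add_one.mpr (Nat.not_even_iff_odd.mpr ho))
        rw [h1, h2]
        simp only [Equiv.Perm.one_apply]
        constructor
        · rintro ⟨h1', h2'⟩
          exact (hswapiff a b hab).mp ⟨h2'.symm, h1'.symm⟩
        · intro hC
          obtain ⟨h1', h2'⟩ := (hswapiff a b hab).mpr hC
          exact ⟨h2'.symm, h1'.symm⟩
    have hpart1 : ((Finset.range m).filter fun t => T t a = T (t+1) b ∧ T t b = T (t+1) a).card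
        = if (a = i ∧ b = i') ∨ (a = i' ∧ b = i) then m else 0 := by
      by_cases hC : (a = i ∧ b = i') ∨ (a = i' ∧ b = i)
      · rw [if_pos hC, Finset.filter_true_of_mem, Finset.card_range]
        intro t ht
        exact (hcond1 t (Finset.mem_range.mp ht)).mpr hC
      · rw [if_neg hC, Finset.filter_false_of_mem, Finset.card_empty]
        intro t ht hcontra
        exact hC ((hcond1 t (Finset.mem_range.mp ht)).mp hcontra)
    have hpart2 : ((Finset.range (h₂ - 1)).filter
          fun t => T (m+t) a = T (m+t+1) b ∧ T (m+t) b = T (m+t+1) a).card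
        = l₂ (σ a) (σ b) := by
      have hcond2 : ∀ t, ((T (m+t) a = T (m+t+1) b ∧ T (m+t) b = T (m+t+1) a)
          ↔ (T₂ t (σ a) = T₂ (t+1) (σ b) ∧ T₂ t (σ b) = T₂ (t+1) (σ a))) := by
        intro t
        rw [show m+t+1 = m+(t+1) by omega, hTm t, hTm (t+1)]
        simp only [Equiv.Perm.mul_apply]
      rw [Finset.filter_congr (fun t _ => by
        rw [show ((T (m+t)) a = (T (m+t+1)) b ∧ (T (m+t)) b = (T (m+t+1)) a)
          = ((T₂ t) (σ a) = (T₂ (t+1)) (σ b) ∧ (T₂ t) (σ b) = (T₂ (t+1)) (σ a)) from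
          propext (hcond2 t)])]
      exact hcnt₂ (σ a) (σ b) hσab
    rw [hpart1, hpart2]
    have hl₂ab : l₂ (σ a) (σ b) = lz a b := by
      simp only [hl₂def]
      rw [hσσ, hσσ]
    rw [hl₂ab]
    by_cases hC : (a = i ∧ b = i') ∨ (a = i' ∧ b = i)
    · rw [if_pos hC, show lz a b = 0 from if_pos hC]
      rcases hC with ⟨h1, h2⟩ | ⟨h1, h2⟩
      · rw [h1, h2]; omega
      · rw [h1, h2, hsym i' i]; omega
    · rw [if_neg hC, hlzeq a b hC, Nat.zero_add]

theorem build (l : Fin n → Fin n → ℕ)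
    (hsym : ∀ i j, l i j = l j i) (hdiag : ∀ i, l i i = 0)
    (hodd : ∀ i j, l i j ≠ 0 → Odd (l i j)) (hcons : Consistent l) : Feasible l := by
  obtain ⟨ρ, hρ⟩ := exists_inv_perm l hsym hcons
  apply buildAux (∑ x, ∑ y, l x y) l (le_refl _) hsym hdiag hodd
  refine ⟨ρ, fun a b hab => ?_⟩
  rw [← hρ a b hab]
  constructor
  · exact hodd a b
  · intro ho he
    rw [he] at ho
    exact absurd ho (by decide)

end Build2

/-- For n ≥ 3 and an odd list L: L is feasible iff every triple-restricted list is feasible,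
    and both are equivalent to consistency of L. -/
theorem odd_list_feasibility_characterization (n : ℕ) (hn : 3 ≤ n)
    (l : Fin n → Fin n → ℕ)
    (hsym : ∀ i j, l i j = l j i) (hdiag : ∀ i, l i i = 0)
    (hodd : ∀ i j, l i j ≠ 0 → Odd (l i j)) :
    (Feasible l ↔ ∀ a b c : Fin n, a < b → b < c →
        Feasible (fun i j : Fin 3 => l (![a, b, c] i) (![a, b, c] j))) ∧
    (Feasible l ↔ Consistent l) := by
  have hfc : Feasible l ↔ Consistent l := ⟨feas_cons l hsym, build l hsym hdiag hodd⟩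
  refine ⟨⟨?_, ?_⟩, hfc⟩
  · intro hf a b c hab hbc
    have hcons := feas_cons l hsym hf
    have htric := tricons_of_cons l hsym hcons a b c hab hbc
    exact build _ (fun i j => hsym _ _) (fun i => hdiag _) (fun i j => hodd _ _) htric
  · intro htrip
    have hcons := cons_of_tricons l hsym (fun a b c hab hbc =>
      feas_cons _ (fun i j => hsym _ _) (htrip a b c hab hbc))
    exact build l hsym hdiag hodd hcons
end

section
/- Every non-separable even list L = (l_{ij}) of order n in which every nonzero entry satisfies l_{ij} ≥ n is feasible. -/
open Finset

namespace TangleAux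

variable {n : ℕ}

/-- The permutation of positions swapping `p` and `p+1` (identity if out of range). -/
def stepPerm (n : ℕ) (p : ℕ) : Equiv.Perm (Fin n) :=
  if h : p + 1 < n then Equiv.swap ⟨p, Nat.lt_of_succ_lt h⟩ ⟨p + 1, h⟩ else 1

lemma stepPerm_mul_self (p : ℕ) : stepPerm n p * stepPerm n p = 1 := by
  unfold stepPerm
  split
  · exact Equiv.swap_mul_self _ _
  · simp

/-- The crossing condition: wires `i`, `j` occupy positions `p`, `p+1` under `σ`. -/
def Xing (σ : Equiv.Perm (Fin n)) (p : ℕ) (i j : Fin n) : Prop :=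
  ((σ i : ℕ) = p ∧ (σ j : ℕ) = p + 1) ∨ ((σ j : ℕ) = p ∧ (σ i : ℕ) = p + 1)

instance (σ : Equiv.Perm (Fin n)) (p : ℕ) (i j : Fin n) : Decidable (Xing σ p i j) := by
  unfold Xing; infer_instance

lemma Xing_symm (σ : Equiv.Perm (Fin n)) (p : ℕ) (i j : Fin n) :
    Xing σ p i j ↔ Xing σ p j i := by unfold Xing; tauto

/-- Number of crossings of the pair `{i,j}` along the word `w` started at `σ`. -/
def Cnt : Equiv.Perm (Fin n) → List ℕ → Fin n → Fin n → ℕ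
  | _, [], _, _ => 0
  | σ, p :: w, i, j => (if Xing σ p i j then 1 else 0) + Cnt (stepPerm n p * σ) w i j

/-- Final permutation after running word `w` from `σ`. -/
def endP : Equiv.Perm (Fin n) → List ℕ → Equiv.Perm (Fin n)
  | σ, [] => σ
  | σ, p :: w => endP (stepPerm n p * σ) w

/-- The permutation sequence of the tangle determined by word `w` started at `σ`. -/
def Tfrom : Equiv.Perm (Fin n) → List ℕ → ℕ → Equiv.Perm (Fin n)
  | σ, [], _ => σ
  | σ, _ :: _, 0 => σ
  | σ, p :: w, t + 1 => Tfrom (stepPerm n p * σ) w t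

lemma Tfrom_zero (σ : Equiv.Perm (Fin n)) (w : List ℕ) : Tfrom σ w 0 = σ := by
  cases w <;> rfl

lemma Cnt_cons (σ : Equiv.Perm (Fin n)) (p : ℕ) (w : List ℕ) (i j : Fin n) :
    Cnt σ (p :: w) i j = (if Xing σ p i j then 1 else 0) + Cnt (stepPerm n p * σ) w i j := rfl

lemma endP_cons (σ : Equiv.Perm (Fin n)) (p : ℕ) (w : List ℕ) :
    endP σ (p :: w) = endP (stepPerm n p * σ) w := rfl

lemma Cnt_symm (σ : Equiv.Perm (Fin n)) (w : List ℕ) (i j : Fin n) :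
    Cnt σ w i j = Cnt σ w j i := by
  induction w generalizing σ with
  | nil => rfl
  | cons p w ih =>
      simp only [Cnt, ih]
      congr 1
      exact if_congr (Xing_symm σ p i j) rfl rfl

lemma Cnt_append (σ : Equiv.Perm (Fin n)) (w₁ w₂ : List ℕ) (i j : Fin n) :
    Cnt σ (w₁ ++ w₂) i j = Cnt σ w₁ i j + Cnt (endP σ w₁) w₂ i j := by
  induction w₁ generalizing σ with
  | nil => simp [Cnt, endP]
  | cons p w ih => simp [Cnt, endP, ih, Nat.add_assoc]

lemma endP_append (σ : Equiv.Perm (Fin n)) (w₁ w₂ : List ℕ) :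
    endP σ (w₁ ++ w₂) = endP (endP σ w₁) w₂ := by
  induction w₁ generalizing σ with
  | nil => rfl
  | cons p w ih => simp [endP, ih]

lemma adjacent_step (σ : Equiv.Perm (Fin n)) (p : ℕ) :
    ∀ i : Fin n, (((σ i : Fin n) : ℤ) - ((stepPerm n p * σ) i : ℤ)).natAbs ≤ 1 := by
  intro i
  unfold stepPerm
  split
  · rename_i h
    simp only [Equiv.Perm.mul_apply]
    rcases Equiv.swap_apply_def (⟨p, Nat.lt_of_succ_lt h⟩ : Fin n) ⟨p + 1, h⟩ (σ i) with _
    by_cases h1 : σ i = (⟨p, Nat.lt_of_succ_lt h⟩ : Fin n)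
    · rw [h1, Equiv.swap_apply_left]; simp
    · by_cases h2 : σ i = (⟨p + 1, h⟩ : Fin n)
      · rw [h2, Equiv.swap_apply_right]; simp
      · rw [Equiv.swap_apply_of_ne_of_ne h1 h2]; simp
  · simp

lemma tangle_adjacent (σ : Equiv.Perm (Fin n)) (w : List ℕ) (t : ℕ) (i : Fin n) :
    ((Tfrom σ w t i : ℤ) - (Tfrom σ w (t + 1) i : ℤ)).natAbs ≤ 1 := by
  induction w generalizing σ t with
  | nil => simp [Tfrom]
  | cons p w ih =>
      cases t with
      | zero =>
          have h0 : Tfrom σ (p :: w) 0 = σ := rfl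
          have h1 : Tfrom σ (p :: w) 1 = Tfrom (stepPerm n p * σ) w 0 := rfl
          rw [h0, h1, Tfrom_zero]
          exact adjacent_step σ p i
      | succ t => exact ih (stepPerm n p * σ) t

/-- The crossing event in `SwapCount` coincides with `Xing`. -/
lemma event_iff (σ : Equiv.Perm (Fin n)) (p : ℕ) (i j : Fin n) (hij : i ≠ j) :
    (σ i = (stepPerm n p * σ) j ∧ σ j = (stepPerm n p * σ) i) ↔ Xing σ p i j := by
  unfold stepPerm Xing
  split
  · rename_i h
    set a : Fin n := ⟨p, Nat.lt_of_succ_lt h⟩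
    set b : Fin n := ⟨p + 1, h⟩
    simp only [Equiv.Perm.mul_apply]
    constructor
    · rintro ⟨h1, h2⟩
      have hne : σ i ≠ σ j := fun hc => hij (σ.injective hc)
      have hmoved : Equiv.swap a b (σ j) ≠ σ j := fun hc => hne (h1.trans hc)
      have hj : σ j = a ∨ σ j = b := ((Equiv.swap_apply_ne_self_iff).1 hmoved).2
      rcases hj with hj | hj
      · right
        rw [hj, Equiv.swap_apply_left] at h1
        exact ⟨congrArg Fin.val hj, congrArg Fin.val h1⟩
      · left
        rw [hj, Equiv.swap_apply_right] at h1
        exact ⟨congrArg Fin.val h1, congrArg Fin.val hj⟩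
    · rintro (⟨h1, h2⟩ | ⟨h1, h2⟩)
      · have hi : σ i = a := Fin.ext h1
        have hj : σ j = b := Fin.ext h2
        rw [hi, hj, Equiv.swap_apply_left, Equiv.swap_apply_right]
        exact ⟨rfl, rfl⟩
      · have hj : σ j = a := Fin.ext h1
        have hi : σ i = b := Fin.ext h2
        rw [hi, hj, Equiv.swap_apply_left, Equiv.swap_apply_right]
        exact ⟨rfl, rfl⟩
  · rename_i h
    simp only [one_mul]
    constructor
    · rintro ⟨h1, _⟩
      exact absurd (σ.injective h1) hij
    · rintro (⟨_, h2⟩ | ⟨_, h2⟩) <;>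
        · exfalso; have := (σ j).isLt; have := (σ i).isLt; omega


lemma swapCount_eq_Cnt (w : List ℕ) (σ : Equiv.Perm (Fin n)) (i j : Fin n) (hij : i ≠ j) :
    ((Finset.range w.length).filter fun t =>
      Tfrom σ w t i = Tfrom σ w (t + 1) j ∧ Tfrom σ w t j = Tfrom σ w (t + 1) i).card
      = Cnt σ w i j := by
  induction w generalizing σ with
  | nil => simp [Cnt]
  | cons p w ih =>
      rw [Finset.card_filter, List.length_cons, Finset.sum_range_succ']
      have hshift : ∀ t : ℕ,
          (if Tfrom σ (p :: w) (t + 1) i = Tfrom σ (p :: w) (t + 2) j ∧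
              Tfrom σ (p :: w) (t + 1) j = Tfrom σ (p :: w) (t + 2) i then 1 else 0)
          = (if Tfrom (stepPerm n p * σ) w t i = Tfrom (stepPerm n p * σ) w (t + 1) j ∧
              Tfrom (stepPerm n p * σ) w t j = Tfrom (stepPerm n p * σ) w (t + 1) i then 1 else 0) :=
        fun t => rfl
      simp only [hshift]
      rw [← Finset.card_filter]
      rw [ih (stepPerm n p * σ)]
      have h0 : Tfrom σ (p :: w) 0 = σ := rfl
      have h1 : Tfrom σ (p :: w) (0 + 1) = stepPerm n p * σ := by
        show Tfrom (stepPerm n p * σ) w 0 = _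
        exact Tfrom_zero _ _
      rw [h0, h1]
      have : (if σ i = (stepPerm n p * σ) j ∧ σ j = (stepPerm n p * σ) i then 1 else 0)
          = (if Xing σ p i j then 1 else 0) := if_congr (event_iff σ p i j hij) rfl rfl
      rw [this, Cnt, Nat.add_comm]

lemma Xing_mul_step (σ : Equiv.Perm (Fin n)) (p : ℕ) (i j : Fin n) :
    Xing (stepPerm n p * σ) p i j ↔ Xing σ p i j := by
  unfold Xing stepPerm
  split
  · rename_i h
    set a : Fin n := ⟨p, Nat.lt_of_succ_lt h⟩ with ha
    set b : Fin n := ⟨p + 1, h⟩ with hb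
    have key : ∀ x : Fin n,
        (((Equiv.swap a b * σ) x : ℕ) = p ↔ (σ x : ℕ) = p + 1) ∧
        (((Equiv.swap a b * σ) x : ℕ) = p + 1 ↔ (σ x : ℕ) = p) := by
      intro x
      simp only [Equiv.Perm.mul_apply]
      constructor
      · constructor
        · intro hx
          have : Equiv.swap a b (σ x) = a := Fin.ext hx
          have : σ x = b := by
            have := congrArg (Equiv.swap a b) this
            rwa [Equiv.swap_apply_self, Equiv.swap_apply_left] at this
          exact congrArg Fin.val this
        · intro hx
          have : σ x = b := Fin.ext hx
          rw [this, Equiv.swap_apply_right]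
      · constructor
        · intro hx
          have : Equiv.swap a b (σ x) = b := Fin.ext hx
          have : σ x = a := by
            have := congrArg (Equiv.swap a b) this
            rwa [Equiv.swap_apply_self, Equiv.swap_apply_right] at this
          exact congrArg Fin.val this
        · intro hx
          have : σ x = a := Fin.ext hx
          rw [this, Equiv.swap_apply_left]
    rw [(key i).1, (key i).2, (key j).1, (key j).2]
    tauto
  · simp only [one_mul]

lemma Cnt_rep_odd (p : ℕ) (w' : List ℕ) (i j : Fin n) (m : ℕ) (σ : Equiv.Perm (Fin n)) :
    Cnt σ (List.replicate (2 * m + 1) p ++ w') i j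
      = (if Xing σ p i j then 2 * m + 1 else 0) + Cnt (stepPerm n p * σ) w' i j := by
  induction m with
  | zero =>
      simp only [Nat.mul_zero, Nat.zero_add, List.replicate_succ, List.replicate_zero,
        List.nil_append, List.cons_append, Cnt]
  | succ m ih =>
      have h2 : 2 * (m + 1) + 1 = (2 * m + 1) + 1 + 1 := by omega
      rw [h2, List.replicate_succ, List.replicate_succ, List.cons_append, List.cons_append,
        Cnt_cons, Cnt_cons]
      have hxs : (if Xing (stepPerm n p * σ) p i j then 1 else 0)
          = (if Xing σ p i j then 1 else 0) := if_congr (Xing_mul_step σ p i j) rfl rfl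
      have hss : stepPerm n p * (stepPerm n p * σ) = σ := by
        rw [← mul_assoc, stepPerm_mul_self, one_mul]
      rw [hxs, hss, ih]
      by_cases hx : Xing σ p i j <;> simp [hx] <;> omega

lemma endP_rep_odd (p : ℕ) (w' : List ℕ) (m : ℕ) (σ : Equiv.Perm (Fin n)) :
    endP σ (List.replicate (2 * m + 1) p ++ w') = endP (stepPerm n p * σ) w' := by
  induction m with
  | zero => rfl
  | succ m ih =>
      have h2 : 2 * (m + 1) + 1 = (2 * m + 1) + 1 + 1 := by omega
      rw [h2, List.replicate_succ, List.replicate_succ, List.cons_append, List.cons_append,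
        endP_cons, endP_cons]
      have hss : stepPerm n p * (stepPerm n p * σ) = σ := by
        rw [← mul_assoc, stepPerm_mul_self, one_mul]
      rw [hss, ih]

/-- Ordered disagreement pairs between the order of `σ` and the order of `κ`. -/
def disag (κ : Fin n → ℕ) (σ : Equiv.Perm (Fin n)) : Finset (Fin n × Fin n) :=
  Finset.univ.filter fun q => (σ q.1 : ℕ) < (σ q.2 : ℕ) ∧ κ q.2 < κ q.1

lemma path_zero (κ : Fin n → ℕ) (hκ : Function.Injective κ) (e : Fin n → Fin n → ℕ)
    (σ : Equiv.Perm (Fin n)) (h0 : (disag κ σ).card = 0) :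
    ∃ w : List ℕ,
      (∀ i j, κ i < κ j → ((endP σ w) i : ℕ) < ((endP σ w) j : ℕ)) ∧
      (∀ i j, i ≠ j → Cnt σ w i j =
        if ((σ i : ℕ) < (σ j : ℕ) ∧ κ j < κ i) ∨ ((σ j : ℕ) < (σ i : ℕ) ∧ κ i < κ j)
        then 1 + 2 * e i j else 0) := by
  have hempty : disag κ σ = ∅ := Finset.card_eq_zero.1 h0
  have hno : ∀ i j : Fin n, ¬ ((σ i : ℕ) < (σ j : ℕ) ∧ κ j < κ i) := by
    intro i j hc
    have : (i, j) ∈ disag κ σ := by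
      simp only [disag, Finset.mem_filter, Finset.mem_univ, true_and]; exact hc
    rw [hempty] at this; exact absurd this (Finset.notMem_empty _)
  refine ⟨[], ?_, ?_⟩
  · intro i j hij
    show (σ i : ℕ) < (σ j : ℕ)
    have hne : i ≠ j := fun h => absurd (h ▸ hij) (lt_irrefl _)
    have hσne : (σ i : ℕ) ≠ (σ j : ℕ) := fun h =>
      hne (σ.injective (Fin.ext h))
    rcases Nat.lt_or_ge (σ i : ℕ) (σ j : ℕ) with h | h
    · exact h
    · exfalso
      have : (σ j : ℕ) < (σ i : ℕ) := lt_of_le_of_ne h (Ne.symm hσne)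
      exact hno j i ⟨this, hij⟩
  · intro i j hij
    have : ¬ (((σ i : ℕ) < (σ j : ℕ) ∧ κ j < κ i) ∨ ((σ j : ℕ) < (σ i : ℕ) ∧ κ i < κ j)) := by
      rintro (hc | hc)
      · exact hno i j hc
      · exact hno j i hc
    rw [if_neg this]; rfl

lemma exists_adj_disag (κ : Fin n → ℕ) (hκ : Function.Injective κ)
    (σ : Equiv.Perm (Fin n)) (hne : (disag κ σ).Nonempty) :
    ∃ u v : Fin n, (σ u : ℕ) + 1 = (σ v : ℕ) ∧ κ v < κ u := by
  by_contra hna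
  push_neg at hna
  have base : ∀ x y : Fin n, (y : ℕ) = (x : ℕ) + 1 → κ (σ.symm x) < κ (σ.symm y) := by
    intro x y hxy
    have h1 : (σ (σ.symm x) : ℕ) + 1 = (σ (σ.symm y) : ℕ) := by
      rw [Equiv.apply_symm_apply, Equiv.apply_symm_apply]; omega
    have hle := hna (σ.symm x) (σ.symm y) h1
    have hxyne : σ.symm x ≠ σ.symm y := fun h => by
      have := congrArg σ h
      rw [Equiv.apply_symm_apply, Equiv.apply_symm_apply] at this
      rw [this] at hxy; omega
    exact lt_of_le_of_ne hle (fun h => hxyne (hκ h))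
  have chain : ∀ k : ℕ, ∀ x y : Fin n, (y : ℕ) = (x : ℕ) + k + 1 →
      κ (σ.symm x) < κ (σ.symm y) := by
    intro k
    induction k with
    | zero => intro x y hxy; exact base x y hxy
    | succ k ih =>
        intro x y hxy
        have hmidlt : (x : ℕ) + k + 1 < n := by have := y.isLt; omega
        set mid : Fin n := ⟨(x : ℕ) + k + 1, hmidlt⟩ with hmid
        calc κ (σ.symm x) < κ (σ.symm mid) := ih x mid rfl
          _ < κ (σ.symm y) := base mid y (by simp [hmid]; omega)
  obtain ⟨⟨i, j⟩, hm⟩ := hne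
  simp only [disag, Finset.mem_filter, Finset.mem_univ, true_and] at hm
  obtain ⟨hlt, hκlt⟩ := hm
  have := chain ((σ j : ℕ) - (σ i : ℕ) - 1) (σ i) (σ j) (by omega)
  rw [Equiv.symm_apply_apply, Equiv.symm_apply_apply] at this
  omega

lemma path (κ : Fin n → ℕ) (hκ : Function.Injective κ) (e : Fin n → Fin n → ℕ)
    (he : ∀ i j, e i j = e j i) :
    ∀ (N : ℕ) (σ : Equiv.Perm (Fin n)), (disag κ σ).card ≤ N →
    ∃ w : List ℕ,
      (∀ i j, κ i < κ j → ((endP σ w) i : ℕ) < ((endP σ w) j : ℕ)) ∧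
      (∀ i j, i ≠ j → Cnt σ w i j =
        if ((σ i : ℕ) < (σ j : ℕ) ∧ κ j < κ i) ∨ ((σ j : ℕ) < (σ i : ℕ) ∧ κ i < κ j)
        then 1 + 2 * e i j else 0) := by
  intro N
  induction N with
  | zero => intro σ h0; exact path_zero κ hκ e σ (Nat.le_zero.1 h0)
  | succ N ih =>
      intro σ hcard
      by_cases h0 : (disag κ σ).card = 0
      · exact path_zero κ hκ e σ h0
      -- find an adjacent disagreement
      obtain ⟨u, v, huv, hκvu⟩ := exists_adj_disag κ hκ σ
        (Finset.card_ne_zero.1 h0)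
      set p : ℕ := (σ u : ℕ) with hp
      have hpv : (σ v : ℕ) = p + 1 := by omega
      have hplt : p + 1 < n := hpv ▸ (σ v).isLt
      have hstep : stepPerm n p = Equiv.swap (σ u) (σ v) := by
        have e1 : (⟨p, Nat.lt_of_succ_lt hplt⟩ : Fin n) = σ u := Fin.ext rfl
        have e2 : (⟨p + 1, hplt⟩ : Fin n) = σ v := Fin.ext hpv.symm
        unfold stepPerm
        rw [dif_pos hplt, e1, e2]
      set σ' := stepPerm n p * σ with hσ'def
      have huvne : u ≠ v := fun h => by rw [h] at hp; omega
      have hσ'u : σ' u = σ v := by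
        rw [hσ'def, hstep]; simp [Equiv.swap_apply_left]
      have hσ'v : σ' v = σ u := by
        rw [hσ'def, hstep]; simp [Equiv.swap_apply_right]
      have hσ'other : ∀ x, x ≠ u → x ≠ v → σ' x = σ x := by
        intro x hxu hxv
        rw [hσ'def, hstep]
        simp only [Equiv.Perm.mul_apply]
        exact Equiv.swap_apply_of_ne_of_ne
          (fun h => hxu (σ.injective h)) (fun h => hxv (σ.injective h))
      have hvalother : ∀ x, x ≠ u → x ≠ v → (σ x : ℕ) ≠ p ∧ (σ x : ℕ) ≠ p + 1 := by
        intro x hxu hxv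
        constructor
        · intro h; exact hxu (σ.injective (Fin.ext h))
        · intro h; exact hxv (σ.injective (Fin.ext (h.trans hpv.symm)))
      -- order preservation for all pairs other than {u,v}
      have op : ∀ i j : Fin n, i ≠ j → ¬(i = u ∧ j = v) → ¬(i = v ∧ j = u) →
          ((σ' i : ℕ) < (σ' j : ℕ) ↔ (σ i : ℕ) < (σ j : ℕ)) := by
        intro i j hij h1 h2
        by_cases hiu : i = u
        · subst hiu
          have hjv : j ≠ v := fun h => h1 ⟨rfl, h⟩
          have hj := hvalother j (Ne.symm hij) hjv
          rw [hσ'u, hσ'other j (Ne.symm hij) hjv]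
          omega
        · by_cases hiv : i = v
          · subst hiv
            have hju : j ≠ u := fun h => h2 ⟨rfl, h⟩
            have hj := hvalother j hju (Ne.symm hij)
            rw [hσ'v, hσ'other j hju (Ne.symm hij)]
            omega
          · by_cases hju : j = u
            · subst hju
              have hi := hvalother i hiu hiv
              rw [hσ'u, hσ'other i hiu hiv]
              omega
            · by_cases hjv : j = v
              · subst hjv
                have hi := hvalother i hiu hiv
                rw [hσ'v, hσ'other i hiu hiv]
                omega
              · rw [hσ'other i hiu hiv, hσ'other j hju hjv]
      -- the disagreement set shrinks
      have hmem : (u, v) ∈ disag κ σ := by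
        simp only [disag, Finset.mem_filter, Finset.mem_univ, true_and]
        exact ⟨by omega, hκvu⟩
      have hdisag' : disag κ σ' = (disag κ σ).erase (u, v) := by
        ext ⟨i, j⟩
        simp only [disag, Finset.mem_filter, Finset.mem_univ, true_and, Finset.mem_erase]
        by_cases hij : i = j
        · subst hij; constructor
          · rintro ⟨h, -⟩; omega
          · rintro ⟨-, h, -⟩; omega
        · by_cases h1 : i = u ∧ j = v
          · obtain ⟨rfl, rfl⟩ := h1
            constructor
            · rintro ⟨h, -⟩
              rw [hσ'u, hσ'v] at h; omega
            · rintro ⟨hne, -⟩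
              exact absurd rfl hne
          · by_cases h2 : i = v ∧ j = u
            · obtain ⟨rfl, rfl⟩ := h2
              constructor
              · rintro ⟨-, h⟩; omega
              · rintro ⟨-, h, -⟩; omega
            · have hop := op i j hij h1 h2
              constructor
              · rintro ⟨ha, hb⟩
                refine ⟨?_, hop.1 ha, hb⟩
                intro hc
                rw [Prod.mk.injEq] at hc
                exact h1 hc
              · rintro ⟨-, ha, hb⟩
                exact ⟨hop.2 ha, hb⟩
      have hcard' : (disag κ σ').card ≤ N := by
        rw [hdisag', Finset.card_erase_of_mem hmem]
        omega
      obtain ⟨w', hend', hcnt'⟩ := ih σ' hcard'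
      refine ⟨List.replicate (2 * e u v + 1) p ++ w', ?_, ?_⟩
      · rw [endP_rep_odd]
        exact hend'
      · intro i j hij
        rw [Cnt_rep_odd]
        -- identify the Xing condition
        have hxing : Xing σ p i j ↔ ((i = u ∧ j = v) ∨ (i = v ∧ j = u)) := by
          unfold Xing
          constructor
          · rintro (⟨ha, hb⟩ | ⟨ha, hb⟩)
            · left
              exact ⟨σ.injective (Fin.ext ha), σ.injective (Fin.ext (hb.trans hpv.symm))⟩
            · right
              exact ⟨σ.injective (Fin.ext (hb.trans hpv.symm)), σ.injective (Fin.ext ha)⟩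
          · rintro (⟨rfl, rfl⟩ | ⟨rfl, rfl⟩)
            · left; exact ⟨rfl, hpv⟩
            · right; exact ⟨rfl, hpv⟩
        by_cases h1 : i = u ∧ j = v
        · obtain ⟨rfl, rfl⟩ := h1
          rw [if_pos (hxing.2 (Or.inl ⟨rfl, rfl⟩))]
          have := hcnt' i j hij
          rw [if_neg (by rw [hσ'u, hσ'v]; omega)] at this
          rw [this, if_pos (by omega)]
          omega
        · by_cases h2 : i = v ∧ j = u
          · obtain ⟨rfl, rfl⟩ := h2
            rw [if_pos (hxing.2 (Or.inr ⟨rfl, rfl⟩))]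
            have := hcnt' i j hij
            rw [if_neg (by rw [hσ'u, hσ'v]; omega)] at this
            rw [this, if_pos (by omega)]
            rw [he i j]
            omega
          · rw [if_neg (by rw [hxing]; tauto)]
            have := hcnt' i j hij
            rw [this]
            have hop := op i j hij h1 h2
            have hop2 := op j i (Ne.symm hij)
              (fun hc => h2 ⟨hc.2, hc.1⟩) (fun hc => h1 ⟨hc.2, hc.1⟩)
            rw [if_congr (by rw [hop, hop2]) rfl rfl, Nat.zero_add]

/-! ### The target keys and the change-count function -/

/-- Key function whose induced order is: elements below `j` (in the list order),
then `j`, then everything else, each group in natural order. -/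
def kf (l : Fin n → Fin n → ℕ) (j a : Fin n) : ℕ :=
  (a : ℕ) + (if (a : ℕ) < (j : ℕ) ∧ l a j = 0 then 0 else if (a : ℕ) = (j : ℕ) then 1 else 2) * n

lemma kf_inj (l : Fin n → Fin n → ℕ) (j : Fin n) : Function.Injective (kf l j) := by
  intro a b h
  unfold kf at h
  have := congrArg (· % n) h
  simp only [Nat.add_mul_mod_self_right] at this
  have ha := a.isLt
  have hb := b.isLt
  rw [Nat.mod_eq_of_lt ha, Nat.mod_eq_of_lt hb] at this
  exact Fin.ext this

/-- Number of order changes of the pair `{i,j}` along the sequence of keys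
`κ0, kf l j₀, kf l j₁, …` for `K = [j₀, j₁, …]`. -/
def chg (l : Fin n → Fin n → ℕ) : (Fin n → ℕ) → List (Fin n) → Fin n → Fin n → ℕ
  | _, [], _, _ => 0
  | κ0, j0 :: K, i, j =>
      (if (κ0 i < κ0 j ∧ kf l j0 j < kf l j0 i) ∨ (κ0 j < κ0 i ∧ kf l j0 i < kf l j0 j)
        then 1 else 0) + chg l (kf l j0) K i j

lemma chg_cons (l : Fin n → Fin n → ℕ) (κ0 : Fin n → ℕ) (j0 : Fin n) (K : List (Fin n))
    (i j : Fin n) :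
    chg l κ0 (j0 :: K) i j =
      (if (κ0 i < κ0 j ∧ kf l j0 j < kf l j0 i) ∨ (κ0 j < κ0 i ∧ kf l j0 i < kf l j0 j)
        then 1 else 0) + chg l (kf l j0) K i j := rfl

lemma chg_symm (l : Fin n → Fin n → ℕ) (κ0 : Fin n → ℕ) (K : List (Fin n)) (i j : Fin n) :
    chg l κ0 K i j = chg l κ0 K j i := by
  induction K generalizing κ0 with
  | nil => rfl
  | cons j0 K ih =>
      rw [chg_cons, chg_cons, ih (kf l j0), if_congr (or_comm) rfl rfl]

lemma chg_congr (l : Fin n → Fin n → ℕ) (K : List (Fin n)) (κa κb : Fin n → ℕ)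
    (h : ∀ i j, κa i < κa j ↔ κb i < κb j) (i j : Fin n) :
    chg l κa K i j = chg l κb K i j := by
  cases K with
  | nil => rfl
  | cons j0 K =>
      rw [chg_cons, chg_cons, if_congr (by rw [h i j, h j i]) rfl rfl]

lemma chg_le_length (l : Fin n → Fin n → ℕ) (κ0 : Fin n → ℕ) (K : List (Fin n)) (i j : Fin n) :
    chg l κ0 K i j ≤ K.length := by
  induction K generalizing κ0 with
  | nil => exact le_refl 0
  | cons j0 K ih =>
      rw [chg_cons, List.length_cons]
      have := ih (kf l j0)
      split <;> omega

/-- The last key of the walk. -/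
def endKey (l : Fin n → Fin n → ℕ) : (Fin n → ℕ) → List (Fin n) → (Fin n → ℕ)
  | κ0, [] => κ0
  | _, j0 :: K => endKey l (kf l j0) K

lemma endKey_append_singleton (l : Fin n → Fin n → ℕ) (κ0 : Fin n → ℕ)
    (L : List (Fin n)) (j : Fin n) : endKey l κ0 (L ++ [j]) = kf l j := by
  induction L generalizing κ0 with
  | nil => rfl
  | cons j0 L ih => exact ih (kf l j0)

lemma chg_parity (l : Fin n → Fin n → ℕ) (K : List (Fin n)) :
    ∀ κ0 : Fin n → ℕ, Function.Injective κ0 → ∀ i j : Fin n, i ≠ j →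
    chg l κ0 K i j % 2 =
      (if (κ0 i < κ0 j ↔ endKey l κ0 K i < endKey l κ0 K j) then 0 else 1) := by
  induction K with
  | nil =>
      intro κ0 hκ0 i j hij
      simp [chg, endKey]
  | cons j0 K ih =>
      intro κ0 hκ0 i j hij
      have tot0 : κ0 i < κ0 j ∨ κ0 j < κ0 i := by
        rcases Nat.lt_trichotomy (κ0 i) (κ0 j) with h | h | h
        · exact Or.inl h
        · exact absurd (hκ0 h) hij
        · exact Or.inr h
      have tot1 : kf l j0 i < kf l j0 j ∨ kf l j0 j < kf l j0 i := by
        rcases Nat.lt_trichotomy (kf l j0 i) (kf l j0 j) with h | h | h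
        · exact Or.inl h
        · exact absurd (kf_inj l j0 h) hij
        · exact Or.inr h
      have hcond : ((κ0 i < κ0 j ∧ kf l j0 j < kf l j0 i) ∨
            (κ0 j < κ0 i ∧ kf l j0 i < kf l j0 j))
          ↔ ¬(κ0 i < κ0 j ↔ kf l j0 i < kf l j0 j) := by
        by_cases h1 : κ0 i < κ0 j <;> by_cases h2 : kf l j0 i < kf l j0 j <;>
          simp [h1, h2] <;> omega
      rw [chg_cons, if_congr hcond rfl rfl, Nat.add_mod, ih (kf l j0) (kf_inj l j0) i j hij]
      have hek : endKey l κ0 (j0 :: K) = endKey l (kf l j0) K := rfl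
      rw [hek]
      by_cases hA : κ0 i < κ0 j <;>
        by_cases hA' : kf l j0 i < kf l j0 j <;>
        by_cases hB : endKey l (kf l j0) K i < endKey l (kf l j0) K j <;>
        simp [hA, hA', hB]

lemma chg_of_agree (l : Fin n → Fin n → ℕ) (x y : Fin n) (K : List (Fin n)) :
    ∀ κ0 : Fin n → ℕ, κ0 x < κ0 y → (∀ j ∈ K, kf l j x < kf l j y) →
    chg l κ0 K x y = 0 := by
  induction K with
  | nil => intro κ0 _ _; rfl
  | cons j0 K ih =>
      intro κ0 h0 hall
      have hj0 : kf l j0 x < kf l j0 y := hall j0 List.mem_cons_self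
      rw [chg_cons, if_neg (by omega), ih (kf l j0) hj0 (fun j hj => hall j (List.mem_cons_of_mem j0 hj))]

lemma chg_zero_mono (l : Fin n → Fin n → ℕ) (x y : Fin n) (hxy : x ≠ y) (K : List (Fin n)) :
    ∀ κ0 : Fin n → ℕ, κ0 x < κ0 y → chg l κ0 K x y = 0 →
    ∀ j ∈ K, ¬ (kf l j y < kf l j x) := by
  induction K with
  | nil => intro κ0 _ _ j hj; exact absurd hj List.not_mem_nil
  | cons j0 K ih =>
      intro κ0 h0 hchg j hj
      have hsplit : (if (κ0 x < κ0 y ∧ kf l j0 y < kf l j0 x) ∨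
          (κ0 y < κ0 x ∧ kf l j0 x < kf l j0 y) then 1 else 0) + chg l (kf l j0) K x y = 0 := by
        rw [← chg_cons]; exact hchg
      have hd0 : ¬ ((κ0 x < κ0 y ∧ kf l j0 y < kf l j0 x) ∨
          (κ0 y < κ0 x ∧ kf l j0 x < kf l j0 y)) := by
        intro hc
        rw [if_pos hc] at hsplit
        omega
      have hj0 : ¬ (kf l j0 y < kf l j0 x) := fun hc => hd0 (Or.inl ⟨h0, hc⟩)
      rcases List.mem_cons.1 hj with rfl | hj
      · exact hj0
      · have hne : kf l j0 x ≠ kf l j0 y := fun h => hxy (kf_inj l j0 h)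
        have hlt : kf l j0 x < kf l j0 y := by
          rcases Nat.lt_trichotomy (kf l j0 x) (kf l j0 y) with h | h | h
          · exact h
          · exact absurd h hne
          · exact absurd h hj0
        have hrest : chg l (kf l j0) K x y = 0 := by
          rw [if_neg hd0] at hsplit
          omega
        exact ih (kf l j0) hlt hrest j hj

/-- Pairs with `l x y = 0` are never inverted by any target key (uses non-separability). -/
lemma kf_natural_of_zero (l : Fin n → Fin n → ℕ)
    (hns : ∀ i j k : Fin n, i < j → j < k → 0 < l i k → 0 < l i j ∨ 0 < l j k)
    (x y j : Fin n) (hxy : (x : ℕ) < (y : ℕ)) (h0 : l x y = 0) :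
    kf l j x < kf l j y := by
  have hx := x.isLt
  have hy := y.isLt
  unfold kf
  by_cases hy1 : (y : ℕ) < (j : ℕ) ∧ l y j = 0
  · -- y is in the bottom group
    rw [if_pos hy1]
    by_cases hx1 : (x : ℕ) < (j : ℕ) ∧ l x j = 0
    · rw [if_pos hx1]; omega
    · -- x would be in the top group: contradiction via non-separability
      exfalso
      have hxj : (x : ℕ) < (j : ℕ) := by omega
      have hlxj : l x j ≠ 0 := fun h => hx1 ⟨hxj, h⟩
      have := hns x y j (by rw [Fin.lt_def]; omega) (by rw [Fin.lt_def]; omega)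
        (Nat.pos_of_ne_zero hlxj)
      rcases this with h | h
      · omega
      · omega
  · rw [if_neg hy1]
    by_cases hy2 : (y : ℕ) = (j : ℕ)
    · -- y = j
      rw [if_pos hy2]
      by_cases hx1 : (x : ℕ) < (j : ℕ) ∧ l x j = 0
      · rw [if_pos hx1]; omega
      · exfalso
        have hyj : y = j := Fin.ext hy2
        have : l x j = 0 := by rw [← hyj]; exact h0
        exact hx1 ⟨by omega, this⟩
    · rw [if_neg hy2]
      by_cases hx1 : (x : ℕ) < (j : ℕ) ∧ l x j = 0
      · rw [if_pos hx1]; omega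
      · rw [if_neg hx1]
        by_cases hx2 : (x : ℕ) = (j : ℕ)
        · rw [if_pos hx2]; omega
        · rw [if_neg hx2]; omega

/-- A positive pair `{x,y}` is inverted by the key targeted at `y`. -/
lemma kf_inverted_of_pos (l : Fin n → Fin n → ℕ) (x y : Fin n)
    (hxy : (x : ℕ) < (y : ℕ)) (hl : l x y ≠ 0) :
    kf l y y < kf l y x := by
  have hx := x.isLt
  have hy := y.isLt
  unfold kf
  rw [if_neg (by omega), if_pos rfl, if_neg (by rintro ⟨-, h⟩; exact hl h),
    if_neg (by omega)]
  omega

/-- Assembly: given a feasible demand function `r`, build a word realizing it exactly. -/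
lemma assemble (l : Fin n → Fin n → ℕ) (K : List (Fin n)) :
    ∀ (σ : Equiv.Perm (Fin n)) (r : Fin n → Fin n → ℕ),
    (∀ i j, r i j = r j i) →
    (∀ i j, i ≠ j →
      chg l (fun a => (σ a : ℕ)) K i j ≤ r i j ∧
      chg l (fun a => (σ a : ℕ)) K i j % 2 = r i j % 2 ∧
      (chg l (fun a => (σ a : ℕ)) K i j = 0 → r i j = 0)) →
    ∃ w : List ℕ, ∀ i j, i ≠ j → Cnt σ w i j = r i j := by
  induction K with
  | nil =>
      intro σ r hr hcomp
      refine ⟨[], fun i j hij => ?_⟩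
      have := (hcomp i j hij).2.2 rfl
      rw [this]; rfl
  | cons j0 K ih =>
      intro σ r hr hcomp
      have hκinj : Function.Injective (kf l j0) := kf_inj l j0
      have he : ∀ i j, (fun i j => (r i j - (1 + chg l (kf l j0) K i j)) / 2) i j
          = (fun i j => (r i j - (1 + chg l (kf l j0) K i j)) / 2) j i := by
        intro i j
        simp only
        rw [hr i j, chg_symm]
      obtain ⟨w1, hend, hcnt⟩ := path (kf l j0) hκinj
        (fun i j => (r i j - (1 + chg l (kf l j0) K i j)) / 2) he
        (disag (kf l j0) σ).card σ le_rfl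
      have hord : ∀ i j : Fin n, kf l j0 i < kf l j0 j ↔
          ((endP σ w1) i : ℕ) < ((endP σ w1) j : ℕ) := by
        intro i j
        by_cases hij : i = j
        · subst hij; omega
        constructor
        · exact hend i j
        · intro hσ
          rcases Nat.lt_trichotomy (kf l j0 i) (kf l j0 j) with h | h | h
          · exact h
          · exact absurd (hκinj h) hij
          · have := hend j i h; omega
      have hr' : ∀ i j, r i j - Cnt σ w1 i j = r j i - Cnt σ w1 j i := by
        intro i j
        rw [hr i j, Cnt_symm]
      have hchg_next : ∀ i j : Fin n,
          chg l (fun a => (((endP σ w1) a : ℕ))) K i j = chg l (kf l j0) K i j :=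
        chg_congr l K _ (kf l j0) (fun i j => (hord i j).symm)
      -- key facts per pair
      have hkey : ∀ i j : Fin n, i ≠ j →
          Cnt σ w1 i j ≤ r i j ∧ r i j - Cnt σ w1 i j =
            (if ((σ i : ℕ) < (σ j : ℕ) ∧ kf l j0 j < kf l j0 i) ∨
              ((σ j : ℕ) < (σ i : ℕ) ∧ kf l j0 i < kf l j0 j)
              then chg l (kf l j0) K i j else r i j) := by
        intro i j hij
        obtain ⟨hc1, hc2, hc3⟩ := hcomp i j hij
        rw [chg_cons] at hc1 hc2
        have hcntv := hcnt i j hij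
        by_cases hd : ((σ i : ℕ) < (σ j : ℕ) ∧ kf l j0 j < kf l j0 i) ∨
            ((σ j : ℕ) < (σ i : ℕ) ∧ kf l j0 i < kf l j0 j)
        · rw [if_pos hd] at hc1 hc2 ⊢
          rw [if_pos hd] at hcntv
          have hcv : Cnt σ w1 i j = r i j - chg l (kf l j0) K i j := by
            rw [hcntv]
            omega
          exact ⟨by omega, by omega⟩
        · rw [if_neg hd] at hc1 hc2 ⊢
          rw [if_neg hd] at hcntv
          exact ⟨by omega, by omega⟩
      have hcomp' : ∀ i j : Fin n, i ≠ j →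
          chg l (fun a => (((endP σ w1) a : ℕ))) K i j ≤ r i j - Cnt σ w1 i j ∧
          chg l (fun a => (((endP σ w1) a : ℕ))) K i j % 2 = (r i j - Cnt σ w1 i j) % 2 ∧
          (chg l (fun a => (((endP σ w1) a : ℕ))) K i j = 0 → r i j - Cnt σ w1 i j = 0) := by
        intro i j hij
        obtain ⟨hc1, hc2, hc3⟩ := hcomp i j hij
        rw [chg_cons] at hc1 hc2 hc3
        obtain ⟨hle, hr'v⟩ := hkey i j hij
        rw [hchg_next i j]
        by_cases hd : ((σ i : ℕ) < (σ j : ℕ) ∧ kf l j0 j < kf l j0 i) ∨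
            ((σ j : ℕ) < (σ i : ℕ) ∧ kf l j0 i < kf l j0 j)
        · rw [if_pos hd] at hc1 hc2 hc3 hr'v
          exact ⟨by omega, by omega, fun h => by omega⟩
        · rw [if_neg hd] at hc1 hc2 hc3 hr'v
          refine ⟨by omega, by omega, fun h => ?_⟩
          rw [hr'v]
          exact hc3 (by omega)
      obtain ⟨w2, hw2⟩ := ih (endP σ w1) (fun i j => r i j - Cnt σ w1 i j) hr' hcomp'
      refine ⟨w1 ++ w2, fun i j hij => ?_⟩
      rw [Cnt_append, hw2 i j hij]
      have := (hkey i j hij).1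
      omega

lemma main_construction (l : Fin n → Fin n → ℕ) (hn : 2 ≤ n)
    (hsym : ∀ i j, l i j = l j i)
    (heven : ∀ i j, Even (l i j))
    (hns : ∀ i j k : Fin n, i < j → j < k → 0 < l i k → 0 < l i j ∨ 0 < l j k)
    (hbig : ∀ i j, l i j = 0 ∨ n ≤ l i j) :
    ∃ w : List ℕ, ∀ i j : Fin n, i ≠ j → Cnt 1 w i j = l i j := by
  have hpos : 0 < n := by omega
  set K : List (Fin n) := (List.finRange n).reverse ++ [⟨0, hpos⟩] with hKdef
  have hKlen : K.length = n + 1 := by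
    simp [hKdef]
  have hinj1 : Function.Injective (fun a : Fin n => ((1 : Equiv.Perm (Fin n)) a : ℕ)) :=
    fun a b h => Fin.ext h
  have obl : ∀ x y : Fin n, (x : ℕ) < (y : ℕ) →
      chg l (fun a => ((1 : Equiv.Perm (Fin n)) a : ℕ)) K x y ≤ l x y ∧
      chg l (fun a => ((1 : Equiv.Perm (Fin n)) a : ℕ)) K x y % 2 = l x y % 2 ∧
      (chg l (fun a => ((1 : Equiv.Perm (Fin n)) a : ℕ)) K x y = 0 → l x y = 0) := by
    intro x y hxy
    have hxyne : x ≠ y := fun h => by rw [h] at hxy; omega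
    by_cases h0 : l x y = 0
    · have hchg0 : chg l (fun a => ((1 : Equiv.Perm (Fin n)) a : ℕ)) K x y = 0 :=
        chg_of_agree l x y K _ hxy (fun j _ => kf_natural_of_zero l hns x y j hxy h0)
      rw [hchg0, h0]
      exact ⟨le_refl 0, rfl, fun _ => rfl⟩
    · have hl : n ≤ l x y := (hbig x y).resolve_left h0
      have hlev : l x y % 2 = 0 := Nat.even_iff.1 (heven x y)
      have hlen : chg l (fun a => ((1 : Equiv.Perm (Fin n)) a : ℕ)) K x y ≤ n + 1 := by
        have := chg_le_length l (fun a => ((1 : Equiv.Perm (Fin n)) a : ℕ)) K x y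
        omega
      have hpar : chg l (fun a => ((1 : Equiv.Perm (Fin n)) a : ℕ)) K x y % 2 = 0 := by
        rw [chg_parity l K _ hinj1 x y hxyne]
        have hek : endKey l (fun a => ((1 : Equiv.Perm (Fin n)) a : ℕ)) K = kf l ⟨0, hpos⟩ := by
          rw [hKdef]
          exact endKey_append_singleton l _ _ _
        rw [hek]
        have hc : ((⟨0, hpos⟩ : Fin n) : ℕ) = 0 := rfl
        have hk0 : kf l ⟨0, hpos⟩ x < kf l ⟨0, hpos⟩ y := by
          have hx := x.isLt
          have hy := y.isLt
          unfold kf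
          split_ifs <;> omega
        simp only [Equiv.Perm.one_apply]
        exact if_pos (Iff.intro (fun _ => hk0) (fun _ => hxy))
      have hne0 : chg l (fun a => ((1 : Equiv.Perm (Fin n)) a : ℕ)) K x y ≠ 0 := by
        intro hzero
        have hmem : y ∈ K := by
          rw [hKdef]
          exact List.mem_append_left _ (List.mem_reverse.2 (List.mem_finRange y))
        have := chg_zero_mono l x y hxyne K _ hxy hzero y hmem
        exact this (kf_inverted_of_pos l x y hxy h0)
      exact ⟨by omega, by omega, fun h => absurd h hne0⟩
  have hcomp : ∀ i j : Fin n, i ≠ j →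
      chg l (fun a => ((1 : Equiv.Perm (Fin n)) a : ℕ)) K i j ≤ l i j ∧
      chg l (fun a => ((1 : Equiv.Perm (Fin n)) a : ℕ)) K i j % 2 = l i j % 2 ∧
      (chg l (fun a => ((1 : Equiv.Perm (Fin n)) a : ℕ)) K i j = 0 → l i j = 0) := by
    intro i j hij
    rcases Nat.lt_trichotomy (i : ℕ) (j : ℕ) with h | h | h
    · exact obl i j h
    · exact absurd (Fin.ext h) hij
    · have := obl j i h
      rw [chg_symm l _ K i j, hsym i j]
      exact this
  exact assemble l K 1 l hsym hcomp

end TangleAux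

/-- Every non-separable even list whose nonzero entries are all at least n is feasible. -/
theorem big_even_nonseparable_feasible (n : ℕ) (l : Fin n → Fin n → ℕ)
    (hsym : ∀ i j, l i j = l j i) (hdiag : ∀ i, l i i = 0)
    (heven : ∀ i j, Even (l i j))
    (hns : ∀ i j k : Fin n, i < j → j < k → 0 < l i k → 0 < l i j ∨ 0 < l j k)
    (hbig : ∀ i j, l i j = 0 ∨ n ≤ l i j) :
    Feasible l := by
  by_cases hn : n < 2
  · refine ⟨1, fun _ => 1, ⟨⟨le_refl 1, fun t ht => absurd ht (by omega)⟩, rfl,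
      fun i j hij => ?_⟩⟩
    exfalso
    have hi := i.isLt
    have hj := j.isLt
    exact hij (Fin.ext (by omega))
  · obtain ⟨w, hw⟩ := TangleAux.main_construction l (by omega) hsym heven hns hbig
    refine ⟨w.length + 1, fun t => TangleAux.Tfrom 1 w t,
      ⟨⟨by omega, fun t ht => ?_⟩, TangleAux.Tfrom_zero 1 w, fun i j hij => ?_⟩⟩
    · intro i
      exact TangleAux.tangle_adjacent 1 w t i
    · show ((Finset.range (w.length + 1 - 1)).filter fun t =>
        TangleAux.Tfrom 1 w t i = TangleAux.Tfrom 1 w (t + 1) j ∧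
        TangleAux.Tfrom 1 w t j = TangleAux.Tfrom 1 w (t + 1) i).card = l i j
      have hlen : w.length + 1 - 1 = w.length := rfl
      rw [hlen, TangleAux.swapCount_eq_Cnt w 1 i j hij]
      exact hw i j hij
end

section
/- For any non-separable even list L, the binary relation ≤_L on [n] defined by i ≤_L j iff (i ≤ j and l_{ij} = 0) is a partial order. -/
open Finset

theorem eq_zero_of_nonseparable {α : Type*} [LT α] {l : α → α → ℕ}
    (hns : ∀ i j k : α, i < j → j < k → 0 < l i k → 0 < l i j ∨ 0 < l j k)
    {i j k : α} (hij : i < j) (hjk : j < k) (hlij : l i j = 0) (hljk : l j k = 0) :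
    l i k = 0 := by
  by_contra hlik
  rcases hns i j k hij hjk (Nat.pos_of_ne_zero hlik) with h | h <;> omega

theorem leL_partial_order_general (n : ℕ) (l : Fin n → Fin n → ℕ)
    (hdiag : ∀ i, l i i = 0)
    (hns : ∀ i j k : Fin n, i < j → j < k → 0 < l i k → 0 < l i j ∨ 0 < l j k) :
    (∀ i : Fin n, i ≤ i ∧ l i i = 0) ∧
    (∀ i j : Fin n, (i ≤ j ∧ l i j = 0) → (j ≤ i ∧ l j i = 0) → i = j) ∧
    (∀ i j k : Fin n, (i ≤ j ∧ l i j = 0) → (j ≤ k ∧ l j k = 0) →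
      (i ≤ k ∧ l i k = 0)) := by
  refine ⟨fun i => ⟨le_rfl, hdiag i⟩, fun i j hij hji => le_antisymm hij.1 hji.1, ?_⟩
  rintro i j k ⟨hij, hlij⟩ ⟨hjk, hljk⟩
  refine ⟨hij.trans hjk, ?_⟩
  rcases hij.eq_or_lt with rfl | hij
  · exact hljk
  rcases hjk.eq_or_lt with rfl | hjk
  · exact hlij
  exact eq_zero_of_nonseparable hns hij hjk hlij hljk

/-- For a non-separable even list, the relation i ≤_L j ↔ (i ≤ j ∧ l i j = 0)
    is a partial order. -/
theorem leL_partial_order (n : ℕ) (l : Fin n → Fin n → ℕ)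
    (hsym : ∀ i j, l i j = l j i) (hdiag : ∀ i, l i i = 0)
    (heven : ∀ i j, Even (l i j))
    (hns : ∀ i j k : Fin n, i < j → j < k → 0 < l i k → 0 < l i j ∨ 0 < l j k) :
    (∀ i : Fin n, i ≤ i ∧ l i i = 0) ∧
    (∀ i j : Fin n, (i ≤ j ∧ l i j = 0) → (j ≤ i ∧ l j i = 0) → i = j) ∧
    (∀ i j k : Fin n, (i ≤ j ∧ l i j = 0) → (j ≤ k ∧ l j k = 0) →
      (i ≤ k ∧ l i k = 0)) :=
  leL_partial_order_general n l hdiag hns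
end
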